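/- arXiv:2109.09174 — 9 statements merged into one kernel-verified Lean document; each statement's English description precedes it below -/
import Mathlib

section
/- The symmetric group S(Ω) on an infinite set Ω has no minimal generating set; that is, for every subset S ⊆ S(Ω) that generates S(Ω), there exists a proper subset of S that still generates S(Ω). -/
/-!
Every sequence of permutations of `Ω` lies in a finitely generated subgroup of `Perm Ω`. This
rules out minimal generating sets: a generating set `S` is infinite because `Perm Ω` is
uncountable, a sequence of distinct elements of `S` lies in a subgroup generated by finitely many
words in `S`, and the finitely many letters of these words miss some term `s` of the sequence, so
`S \ {s}` still generates.

For the sequence, choose disjoint `A`, `B` such that `A`, `B` and `(A ∪ B)ᶜ` all have the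
cardinality of `Ω`. Every permutation is a product `b₁ * a₁ * b₂ * a₂` where the `bᵢ` fix `B` and
the `aᵢ` fix `A` pointwise, so it suffices to treat a sequence `tₙ` of permutations fixing a set
`A` of full cardinality pointwise. Identify `Ω` with `ℤ × Ω` so that `x ∉ A` becomes `(0, x)`;
the resulting embedding `ι` of `Perm Ω` as the permutations of level `0` fixes every `tₙ`. A
permutation of level `0` is a fixed word in the level shift `σ` and the twist `θₙ` acting by
`tₙ ^ k` on level `k ≥ 0`, and `ι` turns conjugation by `θₙ` into conjugation by `σ⁻ⁿ V σⁿ`,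
where `V` acts by `θₙ` on level `n`. Hence every `tₙ = ι tₙ` lies in `⟨σ, V, ι σ⟩`.
-/

open Cardinal Equiv MulAction Set

namespace Subgroup

variable {G : Type*} [Group G]

theorem exists_finite_subset_of_mem_closure {S : Set G} {x : G} (hx : x ∈ closure S) :
    ∃ T ⊆ S, T.Finite ∧ x ∈ closure T := by
  induction hx using closure_induction with
  | mem y hy => exact ⟨{y}, singleton_subset_iff.2 hy, finite_singleton y, subset_closure rfl⟩
  | one => exact ⟨∅, empty_subset S, finite_empty, one_mem _⟩
  | mul y z _ _ ihy ihz =>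
    obtain ⟨Ty, hTyS, hTy, hy⟩ := ihy
    obtain ⟨Tz, hTzS, hTz, hz⟩ := ihz
    exact ⟨Ty ∪ Tz, union_subset hTyS hTzS, hTy.union hTz,
      mul_mem (closure_mono subset_union_left hy) (closure_mono subset_union_right hz)⟩
  | inv y _ ih =>
    obtain ⟨T, hTS, hT, hy⟩ := ih
    exact ⟨T, hTS, hT, inv_mem hy⟩

theorem exists_finite_subset_of_fg_le_closure {S : Set G} {H : Subgroup G} (hH : H.FG)
    (hHS : H ≤ closure S) : ∃ T ⊆ S, T.Finite ∧ H ≤ closure T := by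
  obtain ⟨F, rfl, hF⟩ := (fg_iff H).1 hH
  choose! T hTS hT hxT using fun (x : G) (hx : x ∈ F) ↦
    exists_finite_subset_of_mem_closure (hHS (subset_closure hx))
  refine ⟨⋃ x ∈ F, T x, iUnion₂_subset hTS, hF.biUnion hT, (closure_le _).2 fun x hx ↦ ?_⟩
  exact closure_mono (subset_biUnion_of_mem hx) (hxT x hx)

theorem countable_closure {S : Set G} (hS : S.Countable) : (closure S : Set G).Countable := by
  have := hS.to_subtype
  rw [FreeGroup.closure_eq_range, MonoidHom.coe_range]
  exact countable_range _

theorem infinite_of_closure_eq_top [Uncountable G] {S : Set G} (hS : closure S = ⊤) :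
    S.Infinite := fun hfin ↦ by
  have := countable_closure hfin.countable
  rw [hS, coe_top, countable_univ_iff] at this
  exact not_countable (α := G) this

theorem exists_fg_forall_mul_mem {x y : ℕ → G} (hx : ∃ H : Subgroup G, H.FG ∧ ∀ n, x n ∈ H)
    (hy : ∃ H : Subgroup G, H.FG ∧ ∀ n, y n ∈ H) :
    ∃ H : Subgroup G, H.FG ∧ ∀ n, x n * y n ∈ H := by
  obtain ⟨H, hH, hxH⟩ := hx
  obtain ⟨K, hK, hyK⟩ := hy
  exact ⟨H ⊔ K, hH.sup hK, fun n ↦ mul_mem (mem_sup_left (hxH n)) (mem_sup_right (hyK n))⟩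

theorem exists_ssubset_closure_eq_top
    (hG : ∀ s : ℕ → G, ∃ H : Subgroup G, H.FG ∧ ∀ n, s n ∈ H)
    {S : Set G} (hS : closure S = ⊤) (hSinf : S.Infinite) :
    ∃ T ⊂ S, closure T = ⊤ := by
  let s : ℕ → G := fun n ↦ hSinf.natEmbedding S n
  have hs : Function.Injective s := Subtype.val_injective.comp (hSinf.natEmbedding S).injective
  obtain ⟨H, hH, hsH⟩ := hG s
  obtain ⟨T, hTS, hT, hHT⟩ := exists_finite_subset_of_fg_le_closure hH (hS ▸ le_top)
  obtain ⟨_, ⟨n, rfl⟩, hnT⟩ := (infinite_range_of_injective hs).exists_notMem_finite hT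
  refine ⟨S \ {s n}, sdiff_singleton_ssubset.2 (Subtype.prop _), ?_⟩
  have hT' : closure T ≤ closure (S \ {s n}) :=
    closure_mono fun x hx ↦ ⟨hTS hx, fun h ↦ hnT (by rwa [mem_singleton_iff.1 h] at hx)⟩
  rw [eq_top_iff, ← hS, closure_le]
  intro x hx
  by_cases hxn : x = s n
  · exact hxn ▸ hT' (hHT (hsH n))
  · exact subset_closure ⟨hx, hxn⟩

end Subgroup

namespace Cardinal

variable {α : Type*}

theorem mk_eq_of_subset {s t : Set α} (hst : s ⊆ t) (hs : #s = #α) : #t = #α :=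
  (mk_set_le t).antisymm (hs ▸ mk_le_mk_of_subset hst)

theorem mk_eq_or_mk_eq_of_mk_union_eq [Infinite α] {s t : Set α} (h : #↥(s ∪ t) = #α) :
    #s = #α ∨ #t = #α := by
  by_contra! hst
  refine ((mk_union_le s t).trans_lt ?_).ne h
  exact add_lt_of_lt (aleph0_le_mk α) ((mk_set_le s).lt_of_ne hst.1)
    ((mk_set_le t).lt_of_ne hst.2)

theorem exists_subset_mk_eq_mk_diff_eq {s : Set α} (hs : ℵ₀ ≤ #s) :
    ∃ t ⊆ s, #t = #s ∧ #↥(s \ t) = #s := by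
  obtain ⟨e⟩ : Nonempty (s ≃ s ⊕ s) := Cardinal.eq.1 (by rw [mk_sum, lift_id, add_eq_self hs])
  have hpart (f : s → s ⊕ s) (hf : Function.Injective f) :
      #↥((↑) '' (e ⁻¹' range f) : Set α) = #s := by
    rw [mk_image_eq Subtype.val_injective, mk_preimage_equiv, mk_range_eq f hf]
  refine ⟨(↑) '' (e ⁻¹' range Sum.inl), by rintro _ ⟨x, -, rfl⟩; exact x.2,
    hpart _ Sum.inl_injective, (mk_le_mk_of_subset sdiff_subset).antisymm ?_⟩
  refine (hpart _ Sum.inr_injective).symm.le.trans (mk_le_mk_of_subset ?_)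
  rintro _ ⟨x, hx, rfl⟩
  refine ⟨x.2, ?_⟩
  rintro ⟨y, hy, hyx⟩
  rw [Subtype.val_injective hyx] at hy
  exact Set.disjoint_left.1 isCompl_range_inl_range_inr.disjoint hy hx

theorem exists_disjoint_mk_eq [Infinite α] :
    ∃ A B : Set α, Disjoint A B ∧ #A = #α ∧ #B = #α ∧ #↥(A ∪ B)ᶜ = #α := by
  obtain ⟨A, -, hA, hAc⟩ := exists_subset_mk_eq_mk_diff_eq (s := (Set.univ : Set α)) (by simp)
  rw [mk_univ] at hA hAc
  rw [← compl_eq_univ_sdiff] at hAc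
  obtain ⟨B, hBA, hB, hrest⟩ := exists_subset_mk_eq_mk_diff_eq (hAc.symm ▸ aleph0_le_mk α)
  refine ⟨A, B, Set.disjoint_of_subset_right hBA disjoint_compl_right, hA, hB.trans hAc, ?_⟩
  rwa [compl_union, ← sdiff_eq, ← hAc]

end Cardinal

section Factorization

variable {α : Type*}

theorem exists_mem_fixingSubgroup_extends {A C D : Set α} (hCA : Disjoint C A)
    (hDA : Disjoint D A) (e : C ≃ D) (hcompl : #↥(Aᶜ \ C) = #↥(Aᶜ \ D)) :
    ∃ a ∈ fixingSubgroup (Perm α) A, ∀ x : C, a x = e x := by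
  classical
  let f : ↥(A ∪ C) ≃ ↥(A ∪ D) := (Equiv.Set.union hCA.symm).trans
    (((Equiv.refl A).sumCongr e).trans (Equiv.Set.union hDA.symm).symm)
  let g : ↥(A ∪ C) ↪ α := f.toEmbedding.trans (Function.Embedding.subtype _)
  have hrange : range g = A ∪ D := by
    change range (Subtype.val ∘ f) = _
    rw [EquivLike.range_comp, Subtype.range_coe]
  obtain ⟨a, ha⟩ := extend_function g (Cardinal.eq.1 (by
    rwa [hrange, compl_union, compl_union, ← sdiff_eq, ← sdiff_eq]))
  refine ⟨a, (mem_fixingSubgroup_iff _).2 fun x hx ↦ ?_, fun x ↦ ?_⟩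
  · rw [Perm.smul_def, ha ⟨x, mem_union_left C hx⟩]
    simp [g, f, Equiv.Set.union_apply_left hCA.symm (a := ⟨x, mem_union_left C hx⟩) hx]
  · rw [ha ⟨x, mem_union_right A x.2⟩]
    simp [g, f, Equiv.Set.union_apply_right hCA.symm (a := ⟨x, mem_union_right A x.2⟩) x.2]

theorem exists_mem_fixingSubgroup_image_eq {A C D : Set α} (hCA : Disjoint C A)
    (hDA : Disjoint D A) (hCD : #C = #D) (hcompl : #↥(Aᶜ \ C) = #↥(Aᶜ \ D)) :
    ∃ a ∈ fixingSubgroup (Perm α) A, a '' C = D := by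
  obtain ⟨e⟩ := Cardinal.eq.1 hCD
  obtain ⟨a, ha, hae⟩ := exists_mem_fixingSubgroup_extends hCA hDA e hcompl
  refine ⟨a, ha, ?_⟩
  rw [image_eq_range, funext hae, ← Function.comp_def, EquivLike.range_comp, Subtype.range_coe]

theorem exists_mem_fixingSubgroup_mul_eq {A B : Set α} {h : Perm α} (hBA : Disjoint B A)
    (hhBA : Disjoint (h '' B) A) (hcompl : #↥(Aᶜ \ B) = #↥(Aᶜ \ h '' B)) :
    ∃ a ∈ fixingSubgroup (Perm α) A, ∃ b ∈ fixingSubgroup (Perm α) B, a * b = h := by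
  obtain ⟨a, ha, hah⟩ :=
    exists_mem_fixingSubgroup_extends hBA hhBA (Equiv.Set.image h B h.injective) hcompl
  refine ⟨a, ha, a⁻¹ * h, (mem_fixingSubgroup_iff _).2 fun x hx ↦ ?_,
    mul_inv_cancel_left a h⟩
  rw [Perm.smul_def, Perm.mul_apply, Perm.inv_eq_iff_eq, hah ⟨x, hx⟩]
  rfl

variable [Infinite α] {A B : Set α}

theorem exists_fixingSubgroup_mul_mul_eq (hAB : Disjoint A B) (hB : #B = #α)
    (hrest : #↥(A ∪ B)ᶜ = #α) {g : Perm α} (hg : #↥(Aᶜ ∩ g ⁻¹' Aᶜ) = #α) :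
    ∃ a₁ ∈ fixingSubgroup (Perm α) A, ∃ b ∈ fixingSubgroup (Perm α) B,
      ∃ a₂ ∈ fixingSubgroup (Perm α) A, a₁ * b * a₂ = g := by
  obtain ⟨C, hCK, hC, hKC⟩ := exists_subset_mk_eq_mk_diff_eq (hg.symm ▸ aleph0_le_mk α)
  rw [hg] at hC hKC
  have hAcB : Aᶜ \ B = (A ∪ B)ᶜ := by rw [compl_union, sdiff_eq]
  obtain ⟨a₂, ha₂, hCB⟩ := exists_mem_fixingSubgroup_image_eq
    (subset_compl_iff_disjoint_right.1 (hCK.trans inter_subset_left)) hAB.symm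
    (hC.trans hB.symm)
    (by rw [hAcB, hrest]; exact mk_eq_of_subset (sdiff_subset_sdiff_left inter_subset_left) hKC)
  have hhB : ⇑(g * a₂⁻¹) '' B = g '' C := by
    simp [← hCB, image_image]
  have hgC : g '' C ⊆ Aᶜ := image_subset_iff.2 (hCK.trans inter_subset_right)
  have hgKC : #↥(Aᶜ \ g '' C) = #α := by
    refine mk_eq_of_subset ?_ (by rwa [mk_image_eq g.injective])
    rw [image_sdiff g.injective]
    exact sdiff_subset_sdiff_left (image_subset_iff.2 inter_subset_right)
  obtain ⟨a₁, ha₁, b, hb, hab⟩ := exists_mem_fixingSubgroup_mul_eq hAB.symm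
    (hhB ▸ subset_compl_iff_disjoint_right.1 hgC) (by rw [hhB, hAcB, hrest, hgKC])
  exact ⟨a₁, ha₁, b, hb, a₂, ha₂, by rw [hab, inv_mul_cancel_right]⟩

theorem exists_mem_fixingSubgroup_mk_inter_preimage_eq (hAB : Disjoint A B) (hA : #A = #α)
    (hrest : #↥(A ∪ B)ᶜ = #α) (g : Perm α) :
    ∃ b ∈ fixingSubgroup (Perm α) B, #↥(Aᶜ ∩ ⇑(b⁻¹ * g) ⁻¹' Aᶜ) = #α := by
  have hAc : #↥Aᶜ = #α := mk_eq_of_subset (compl_subset_compl.2 subset_union_left) hrest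
  have hsplit : Aᶜ = (Aᶜ ∩ g ⁻¹' B) ∪ (Aᶜ ∩ g ⁻¹' Bᶜ) := by
    rw [← inter_union_distrib_left, ← preimage_union, union_compl_self, preimage_univ,
      inter_univ]
  rw [hsplit] at hAc
  rcases mk_eq_or_mk_eq_of_mk_union_eq hAc with hP | hR
  · refine ⟨1, one_mem _, mk_eq_of_subset ?_ hP⟩
    rw [inv_one, one_mul]
    exact inter_subset_inter_right _ (preimage_mono hAB.subset_compl_left)
  obtain ⟨Q, hQR, hQ, hQdiff⟩ := exists_subset_mk_eq_mk_diff_eq (hR.symm ▸ aleph0_le_mk α)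
  rw [hR] at hQ hQdiff
  have hA' : A ⊆ Bᶜ \ (A ∪ B)ᶜ := fun x hx ↦ ⟨disjoint_left.1 hAB hx, fun h ↦ h (Or.inl hx)⟩
  have hRQ : g '' ((Aᶜ ∩ g ⁻¹' Bᶜ) \ Q) ⊆ Bᶜ \ g '' Q := by
    rw [image_sdiff g.injective]
    exact sdiff_subset_sdiff_left (image_subset_iff.2 inter_subset_right)
  obtain ⟨b, hb, hbZ⟩ := exists_mem_fixingSubgroup_image_eq
    (disjoint_compl_left.mono_right subset_union_right)
    (subset_compl_iff_disjoint_right.1 (image_subset_iff.2 (hQR.trans inter_subset_right)))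
    (by rw [hrest, mk_image_eq g.injective, hQ])
    (by rw [mk_eq_of_subset hA' hA, mk_eq_of_subset hRQ (by rwa [mk_image_eq g.injective])])
  refine ⟨b, hb, mk_eq_of_subset (fun x hx ↦ ⟨(hQR hx).1, ?_⟩) hQ⟩
  obtain ⟨z, hz, hzx⟩ := hbZ ▸ mem_image_of_mem g hx
  simpa [← hzx] using fun h ↦ hz (Or.inl h)

theorem exists_fixingSubgroup_mul_mul_mul_eq (hAB : Disjoint A B) (hA : #A = #α)
    (hB : #B = #α) (hrest : #↥(A ∪ B)ᶜ = #α) (g : Perm α) :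
    ∃ b₁ ∈ fixingSubgroup (Perm α) B, ∃ a₁ ∈ fixingSubgroup (Perm α) A,
      ∃ b₂ ∈ fixingSubgroup (Perm α) B, ∃ a₂ ∈ fixingSubgroup (Perm α) A,
        b₁ * a₁ * b₂ * a₂ = g := by
  obtain ⟨b₁, hb₁, hg⟩ := exists_mem_fixingSubgroup_mk_inter_preimage_eq hAB hA hrest g
  obtain ⟨a₁, ha₁, b₂, hb₂, a₂, ha₂, h⟩ := exists_fixingSubgroup_mul_mul_eq hAB hB hrest hg
  refine ⟨b₁, hb₁, a₁, ha₁, b₂, hb₂, a₂, ha₂, ?_⟩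
  simp only [mul_assoc] at h ⊢
  rw [h, mul_inv_cancel_left]

end Factorization

section Levels

variable {α : Type*}

def levelwise : (ℤ → Perm α) →* Perm (ℤ × α) where
  toFun f := prodShear (Equiv.refl ℤ) f
  map_one' := rfl
  map_mul' _ _ := rfl

@[simp] theorem levelwise_apply (f : ℤ → Perm α) (p : ℤ × α) :
    levelwise f p = (p.1, f p.1 p.2) := rfl

def levelShift : Perm (ℤ × α) := prodCongr (Equiv.addRight 1) (Equiv.refl α)

theorem levelShift_zpow_apply (n : ℤ) (p : ℤ × α) :
    (levelShift ^ n) p = (p.1 + n, p.2) := by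
  induction n using Int.induction_on generalizing p with
  | zero => simp
  | succ n ih => rw [zpow_add_one, Perm.mul_apply, ih]; simp [levelShift]; ring
  | pred n ih =>
    rw [zpow_sub_one, Perm.mul_apply, ih, Perm.inv_def]
    simp [levelShift]; ring

theorem levelShift_zpow_conj (f : ℤ → Perm α) (n : ℤ) :
    (levelShift ^ n)⁻¹ * levelwise f * levelShift ^ n = levelwise fun k ↦ f (k + n) := by
  ext p : 1
  rw [Perm.mul_apply, Perm.mul_apply, Perm.inv_eq_iff_eq, levelShift_zpow_apply,
    levelwise_apply, levelwise_apply, levelShift_zpow_apply]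

theorem levelwise_conj_mulSingle (f : ℤ → Perm α) (x : Perm α) :
    levelwise f * levelwise (Pi.mulSingle 0 x) * (levelwise f)⁻¹ =
      levelwise (Pi.mulSingle 0 (f 0 * x * (f 0)⁻¹)) := by
  rw [← map_mul, ← map_inv, ← map_mul]
  congr 1
  funext k
  obtain rfl | hk := eq_or_ne k 0
  · simp
  · simp [Pi.mulSingle_eq_of_ne hk]

def twist (u : Perm α) : Perm (ℤ × α) := levelwise fun k ↦ u ^ max k 0

/-- The exponent of `u` on level `k` is the second difference of `max k 0`, which is `1` at
`k = 0` and `0` elsewhere. -/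
theorem levelwise_mulSingle_eq (u : Perm α) :
    levelwise (Pi.mulSingle 0 u) = levelShift⁻¹ * twist u * levelShift * (twist u)⁻¹ *
      levelShift * twist u * levelShift⁻¹ * (twist u)⁻¹ := by
  have h₁ := levelShift_zpow_conj (fun k ↦ u ^ max k 0) 1
  have h₂ := levelShift_zpow_conj (fun k ↦ u ^ max k 0) (-1)
  simp only [zpow_one, zpow_neg, inv_inv] at h₁ h₂
  rw [show levelShift⁻¹ * twist u * levelShift * (twist u)⁻¹ * levelShift * twist u *
      levelShift⁻¹ * (twist u)⁻¹ = (levelShift⁻¹ * twist u * levelShift) * (twist u)⁻¹ *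
      (levelShift * twist u * levelShift⁻¹) * (twist u)⁻¹ by group, twist, h₁, h₂,
    ← map_inv, ← map_mul, ← map_mul, ← map_mul]
  congr 1
  funext k
  have hexp : max (k + 1) 0 + -max k 0 + max (k + -1) 0 + -max k 0 = if k = 0 then 1 else 0 := by
    split_ifs <;> omega
  simp only [Pi.mul_apply, Pi.inv_apply, ← zpow_neg, ← zpow_add, hexp, Pi.mulSingle_apply]
  split_ifs <;> simp

theorem exists_equiv_int_prod_of_notMem [Infinite α] {A : Set α} (hA : #A = #α) :
    ∃ E : α ≃ ℤ × α, ∀ x ∉ A, E x = (0, x) := by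
  let f : ↥Aᶜ ↪ ℤ × α := ⟨fun x ↦ (0, x), fun x y h ↦ Subtype.ext (Prod.ext_iff.1 h).2⟩
  have hf : #↥(range f)ᶜ = #α := by
    refine le_antisymm ((mk_set_le _).trans ?_) ?_
    · rw [mk_prod, mk_int, lift_aleph0, lift_uzero, aleph0_mul_eq (aleph0_le_mk α)]
    · refine mk_le_of_injective (f := fun x ↦ (⟨(1, x), ?_⟩ : ↥(range f)ᶜ)) fun x y h ↦ ?_
      · rintro ⟨y, hy⟩
        exact zero_ne_one (congrArg Prod.fst hy)
      · simpa using h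
  obtain ⟨E, hE⟩ := extend_function f (Cardinal.eq.1 (by rw [compl_compl, hA, hf]))
  exact ⟨E, fun x hx ↦ hE ⟨x, hx⟩⟩

theorem permCongr_levelwise_mulSingle {A : Set α} {E : α ≃ ℤ × α}
    (hE : ∀ x ∉ A, E x = (0, x)) {t : Perm α} (ht : t ∈ fixingSubgroup (Perm α) A) :
    E.symm.permCongr (levelwise (Pi.mulSingle 0 t)) = t := by
  replace ht : ∀ y ∈ A, t y = y := (mem_fixingSubgroup_iff _).1 ht
  ext x : 1
  rw [permCongr_apply, symm_symm, symm_apply_eq, levelwise_apply]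
  by_cases hx : x ∈ A
  · rw [ht x hx]
    obtain hk | hk := eq_or_ne (E x).1 0
    · have hy : (E x).2 ∈ A := by
        by_contra hy
        exact (E.injective ((hE _ hy).trans (Prod.ext hk.symm rfl)) ▸ hy) hx
      rw [hk, Pi.mulSingle_eq_same, ht _ hy, ← hk]
    · rw [Pi.mulSingle_eq_of_ne hk, Perm.one_apply]
  · have htx : t x ∉ A := fun h ↦ hx (t.injective (ht _ h) ▸ h)
    rw [hE x hx, hE _ htx]
    simp

theorem exists_fg_forall_mem_of_mem_fixingSubgroup [Infinite α] {A : Set α} (hA : #A = #α)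
    {t : ℕ → Perm α} (ht : ∀ n, t n ∈ fixingSubgroup (Perm α) A) :
    ∃ H : Subgroup (Perm α), H.FG ∧ ∀ n, t n ∈ H := by
  obtain ⟨E, hE⟩ := exists_equiv_int_prod_of_notMem hA
  let c : Perm (ℤ × α) →* Perm α := E.symm.permCongrHom.toMonoidHom
  let ι : Perm α →* Perm α := c.comp (levelwise.comp (MonoidHom.mulSingle (fun _ ↦ Perm α) 0))
  have hι (n : ℕ) : ι (t n) = t n := permCongr_levelwise_mulSingle hE (ht n)
  let σ := c levelShift
  let θ (n : ℕ) : Perm α := c (twist (t n))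
  let V := c (levelwise fun k ↦ θ k.toNat)
  let H := Subgroup.closure {σ, V, ι σ}
  refine ⟨H, (Subgroup.fg_iff H).2 ⟨_, rfl, toFinite _⟩, fun n ↦ ?_⟩
  have hσ : σ ∈ H.comap ι := Subgroup.subset_closure (by simp)
  have hθ (x : Perm α) (hx : x ∈ H.comap ι) : θ n * x * (θ n)⁻¹ ∈ H.comap ι := by
    let L := levelwise fun k ↦ θ (k + n).toNat
    have hL : c L = (σ ^ (n : ℤ))⁻¹ * V * σ ^ (n : ℤ) := by
      simp only [L, σ, V, ← map_zpow, ← map_inv, ← map_mul, levelShift_zpow_conj]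
    have hLH : c L ∈ H := hL ▸ mul_mem
      (mul_mem (inv_mem (zpow_mem (Subgroup.subset_closure (by simp)) _))
        (Subgroup.subset_closure (by simp))) (zpow_mem (Subgroup.subset_closure (by simp)) _)
    have hconj : ι (θ n * x * (θ n)⁻¹) = c L * ι x * (c L)⁻¹ := by
      change c (levelwise (Pi.mulSingle 0 _)) = c L * c (levelwise (Pi.mulSingle 0 x)) * (c L)⁻¹
      rw [← map_inv c L, ← map_mul, ← map_mul, levelwise_conj_mulSingle]
      simp
    rw [Subgroup.mem_comap, hconj]
    exact mul_mem (mul_mem hLH hx) (inv_mem hLH)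
  have hword : t n = σ⁻¹ * (θ n * σ * (θ n)⁻¹) * σ * (θ n * σ⁻¹ * (θ n)⁻¹) := by
    rw [← hι n]
    simp only [ι, σ, θ, MonoidHom.comp_apply, MonoidHom.mulSingle_apply, levelwise_mulSingle_eq,
      map_mul, map_inv]
    group
  have htn : t n ∈ H.comap ι :=
    hword ▸ mul_mem (mul_mem (mul_mem (inv_mem hσ) (hθ σ hσ)) hσ) (hθ _ (inv_mem hσ))
  rwa [Subgroup.mem_comap, hι] at htn

theorem exists_fg_forall_mem [Infinite α] (s : ℕ → Perm α) :
    ∃ H : Subgroup (Perm α), H.FG ∧ ∀ n, s n ∈ H := by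
  obtain ⟨A, B, hAB, hA, hB, hrest⟩ := exists_disjoint_mk_eq (α := α)
  choose b₁ hb₁ a₁ ha₁ b₂ hb₂ a₂ ha₂ hs using
    fun n ↦ exists_fixingSubgroup_mul_mul_mul_eq hAB hA hB hrest (s n)
  simp only [← hs]
  refine Subgroup.exists_fg_forall_mul_mem (Subgroup.exists_fg_forall_mul_mem
    (Subgroup.exists_fg_forall_mul_mem ?_ ?_) ?_) ?_
  exacts [exists_fg_forall_mem_of_mem_fixingSubgroup hB hb₁,
    exists_fg_forall_mem_of_mem_fixingSubgroup hA ha₁,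
    exists_fg_forall_mem_of_mem_fixingSubgroup hB hb₂,
    exists_fg_forall_mem_of_mem_fixingSubgroup hA ha₂]

end Levels

theorem no_minimal_generating_set {Ω : Type*} [Infinite Ω]
    (S : Set (Equiv.Perm Ω)) (hS : Subgroup.closure S = ⊤) :
    ∃ T ⊂ S, Subgroup.closure T = ⊤ := by
  have : Uncountable (Perm Ω) := by
    rw [← aleph0_lt_mk_iff, mk_perm_eq_two_power]
    exact (aleph0_le_mk Ω).trans_lt (cantor _)
  exact Subgroup.exists_ssubset_closure_eq_top exists_fg_forall_mem hS
    (Subgroup.infinite_of_closure_eq_top hS)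
end

section
/- If S generates S(Ω) for an infinite set Ω, and A = {a₁, a₂, ...} is a countable subset of S, then setting S₀ = S \ A and Sₙ = Sₙ₋₁ ∪ {aₙ}, there exists some n such that Sₙ generates S(Ω). -/
/-!
The stages form an increasing chain of subgroups whose union contains `S`, hence is `Sym(Ω)`; so
it suffices that `Sym(Ω)` is not the union of a countable chain of proper subgroups.

Write `Ω ≃ ℕ × Γ` with `|Γ| = |Ω|`. The permutation acting on every fibre `i` by a prescribed
`τ i` lies in some stage, so (diagonally) some stage `H i` induces every permutation of the fibre
`i`, though with uncontrolled behaviour off it. Galvin's commutator trick removes that dirt: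
conjugating by a fixed involution confines it to a sink inside the fibre, and the commutator of
two cleaned elements realising "`σ` on the levels `k ≥ 0` of `ℤ × Ω`" and "shift the levels" is
exactly `σ` on level `0`. Hence a later stage contains `Sym(Δ)`, acting trivially off `Δ`, for a
copy `Δ` of `Ω` with `|Ω \ Δ| = |Ω|`. Identify `Ω` with `Ω ⊕ Ω`, `Δ` being the left summand.
With one more element `u` moving the right summand onto a moiety of the left one, every
permutation fixing pointwise a full-size subset of the left summand is conjugate into `Sym(Δ)`,
and by a pigeonhole argument every permutation is a product of two such.
-/

open Equiv Cardinal Set Filter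
open scoped commutatorElement

universe u v

section CardinalFacts

variable {α : Type u}

theorem Cardinal.mk_sum_self (α : Type u) [Infinite α] : #(α ⊕ α) = #α := by
  simp [add_eq_self (aleph0_le_mk α)]

theorem Cardinal.mk_eq_of_subset_s1 {s t : Set α} (hst : s ⊆ t) (hs : #s = #α) : #t = #α :=
  le_antisymm (mk_set_le t) (hs ▸ mk_le_mk_of_subset hst)

theorem Cardinal.exists_mk_preimage_singleton_eq {γ : Type} [Infinite α] [Finite γ]
    (f : α → γ) : ∃ c, #(f ⁻¹' {c}) = #α := by
  have hcof : ℵ₀ ≤ (#α).ord.cof :=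
    Ordinal.aleph0_le_cof_iff.2 (Ordinal.one_lt_cof_iff.2 (isSuccLimit_ord (aleph0_le_mk α)))
  obtain ⟨⟨c⟩, hc⟩ :=
    infinite_pigeonhole (ULift.up.{u} ∘ f) (aleph0_le_mk α) ((lt_aleph0_of_finite _).trans_le hcof)
  exact ⟨c, by convert hc using 3; ext; simp⟩

theorem Cardinal.exists_fun_forall_mk_preimage_eq (ι : Type) [Finite ι] [Nonempty ι] (α : Type u)
    [Infinite α] : ∃ p : α → ι, ∀ i, #(p ⁻¹' {i}) = #α := by
  have h := aleph0_le_mk α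
  obtain ⟨e⟩ : Nonempty (α ≃ ι × α) := Cardinal.eq.1 <| by
    simp [mk_prod, mul_eq_max_of_aleph0_le_right, h,
      (lift_lt_aleph0.2 (lt_aleph0_of_finite ι)).le.trans h]
  refine ⟨Prod.fst ∘ e, fun i => ?_⟩
  rw [preimage_comp, mk_preimage_equiv, preimage_fst_singleton_eq_range,
    mk_range_eq _ (Prod.mk_right_injective i)]

def Set.IsMoiety (s : Set α) : Prop := #s = #α ∧ #↥sᶜ = #α

theorem Set.exists_isMoiety_subset [Infinite α] {s : Set α} (hs : #s = #α) :
    ∃ t ⊆ s, t.IsMoiety := by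
  obtain ⟨ψ⟩ := Cardinal.eq.1 (hs.trans (mk_sum_self α).symm)
  have hinj : ∀ f : α → α ⊕ α, Function.Injective f →
      Function.Injective fun a => (ψ.symm (f a) : α) :=
    fun f hf => Subtype.val_injective.comp (ψ.symm.injective.comp hf)
  refine ⟨range fun a => (ψ.symm (.inl a) : α), range_subset_iff.2 fun a => (ψ.symm _).2,
    mk_range_eq _ (hinj _ Sum.inl_injective),
    mk_eq_of_subset_s1 ?_ (mk_range_eq _ (hinj _ Sum.inr_injective))⟩
  rintro _ ⟨b, rfl⟩ ⟨a, ha⟩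
  simpa using ψ.symm.injective (Subtype.val_injective ha)

end CardinalFacts

section Extension

variable {α : Type u}

theorem exists_perm_extend {s t : Set α} (e : s ≃ t) (hc : #↥sᶜ = #↥tᶜ) :
    ∃ σ : Perm α, ∀ x : s, σ x = e x := by
  have hrange : range (Subtype.val ∘ e) = t := by simp [range_comp, e.range_eq_univ]
  refine extend_function (e.toEmbedding.trans (Function.Embedding.subtype _)) (Cardinal.eq.1 ?_)
  convert hc using 4
  exact hrange

theorem exists_perm_image_eq {s t : Set α} (h : #s = #t) (hc : #↥sᶜ = #↥tᶜ) :
    ∃ σ : Perm α, σ '' s = t := by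
  obtain ⟨e⟩ := Cardinal.eq.1 h
  obtain ⟨σ, hσ⟩ := exists_perm_extend e hc
  refine ⟨σ, Subset.antisymm (image_subset_iff.2 fun x hx => by simp [hσ ⟨x, hx⟩]) fun y hy => ?_⟩
  exact ⟨_, (e.symm ⟨y, hy⟩).2, by simp [hσ (e.symm ⟨y, hy⟩)]⟩

theorem exists_mul_eq_of_disjoint (g : Perm α) {F N : Set α} (hF : Disjoint F N)
    (hgF : Disjoint (g '' F) N) (hc : #↥(F ∪ N)ᶜ = #↥(g '' F ∪ N)ᶜ) :
    ∃ a c : Perm α, (∀ x ∈ N, a x = x) ∧ (∀ x ∈ F, c x = x) ∧ g = a * c := by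
  classical
  let e : ↥(F ∪ N) ≃ ↥(g '' F ∪ N) := (Equiv.Set.union hF).trans
    (((Equiv.Set.image g F g.injective).sumCongr (Equiv.refl N)).trans (Equiv.Set.union hgF).symm)
  obtain ⟨a, ha⟩ := exists_perm_extend e hc
  refine ⟨a, a⁻¹ * g, fun x hx => ?_, fun x hx => ?_, by group⟩
  · simp [ha ⟨x, .inr hx⟩, e, Equiv.Set.union_apply_right hF (a := ⟨x, .inr hx⟩) hx,
      Equiv.Set.union_symm_apply_right]
  · rw [Perm.mul_apply, Perm.inv_eq_iff_eq]
    simp [ha ⟨x, .inl hx⟩, e, Equiv.Set.union_apply_left hF (a := ⟨x, .inl hx⟩) hx,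
      Equiv.Set.union_symm_apply_left]

theorem Equiv.Perm.exists_sumCongr_one_eq {β : Type*} {g : Perm (α ⊕ β)}
    (hg : ∀ b, g (.inr b) = .inr b) : ∃ σ : Perm α, Perm.sumCongr σ 1 = g := by
  have hleft : ∀ f : Perm (α ⊕ β), (∀ b, f (.inr b) = .inr b) →
      ∀ a, ∃ a', f (.inl a) = .inl a' := by
    intro f hf a
    rcases hfa : f (.inl a) with a' | b
    · exact ⟨a', rfl⟩
    · simpa using f.injective (hfa.trans (hf b).symm)
  have hg' : ∀ b, g⁻¹ (.inr b) = .inr b := fun b => by rw [Perm.inv_eq_iff_eq, hg]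
  choose σ hσ using hleft g hg
  choose σ' hσ' using hleft g⁻¹ hg'
  refine ⟨⟨σ, σ', fun a => ?_, fun a => ?_⟩, ?_⟩
  · simpa [hσ'] using (congrArg (⇑g⁻¹) (hσ a)).symm
  · simpa [hσ] using (congrArg (⇑g) (hσ' a)).symm
  · ext (a | b) <;> simp [hσ, hg]

theorem exists_perm_image_range_inr (α : Type u) [Infinite α] :
    ∃ (u : Perm (α ⊕ α)) (A : Set α), A.IsMoiety ∧ u '' range .inr = .inl '' A := by
  obtain ⟨A, -, hA⟩ := exists_isMoiety_subset (s := (univ : Set α)) mk_univ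
  have hcompl : #↥(Sum.inl '' A : Set (α ⊕ α))ᶜ = #α := by
    rw [mk_eq_of_subset_s1 (s := range (Sum.inr : α → α ⊕ α)) ?_
      (by rw [mk_range_eq _ Sum.inr_injective, mk_sum_self]), mk_sum_self]
    rintro _ ⟨b, rfl⟩ ⟨a, -, h⟩
    exact Sum.inl_ne_inr h
  obtain ⟨u, hu⟩ := exists_perm_image_eq (s := range (Sum.inr : α → α ⊕ α)) (t := Sum.inl '' A)
    (by rw [mk_range_eq _ Sum.inr_injective, mk_image_eq Sum.inl_injective, hA.1])
    (by rw [compl_range_inr, mk_range_eq _ Sum.inl_injective, hcompl])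
  exact ⟨u, A, hA, hu⟩

theorem exists_equiv_sum_apply_inl {α : Type*} {β γ : Type v} {f : α → β}
    (hf : Function.Injective f) (h : #↥(range f)ᶜ = #γ) :
    ∃ E : β ≃ α ⊕ γ, ∀ a, E (f a) = .inl a := by
  classical
  obtain ⟨e⟩ := Cardinal.eq.1 h
  exact ⟨(Equiv.Set.sumCompl (range f)).symm.trans ((Equiv.ofInjective f hf).symm.sumCongr e),
    fun a => by simp [Equiv.Set.sumCompl_symm_apply_of_mem (mem_range_self a)]⟩

theorem Equiv.permCongr_eq_sumCongr_one {α β γ : Type*} {f : α → β} (E : β ≃ α ⊕ γ)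
    (hE : ∀ a, E (f a) = .inl a) {g : Perm β} {σ : Perm α} (hgf : ∀ a, g (f a) = f (σ a))
    (hg : ∀ x ∉ range f, g x = x) : E.permCongr g = Perm.sumCongr σ 1 := by
  have hEsymm : ∀ a, E.symm (.inl a) = f a := fun a => E.symm_apply_eq.2 (hE a).symm
  ext (a | c)
  · simp [hEsymm, hgf, hE]
  · rw [permCongr_apply, hg _ ?_, apply_symm_apply]
    · rfl
    · rintro ⟨a, ha⟩
      simpa [hE] using congrArg E ha

end Extension

section Chains

variable {G G' : Type*} [Group G] [Group G'] {ι : Type*} {H : ι → Subgroup G}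

theorem Monotone.eventually_mem [Preorder ι] (hmono : Monotone H) (hcover : ∀ g, ∃ i, g ∈ H i)
    (g : G) : ∀ᶠ i in atTop, g ∈ H i :=
  let ⟨i, hi⟩ := hcover g
  (eventually_ge_atTop i).mono fun _ hj => hmono hj hi

theorem Monotone.map_equiv [Preorder ι] (hmono : Monotone H) (f : G ≃* G') :
    Monotone fun i => (H i).map f.toMonoidHom :=
  fun _ _ h => Subgroup.map_mono (hmono h)

theorem Subgroup.exists_mem_map_equiv (hcover : ∀ g, ∃ i, g ∈ H i) (f : G ≃* G') (g' : G') :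
    ∃ i, g' ∈ (H i).map f.toMonoidHom :=
  (hcover (f.symm g')).imp fun _ => Subgroup.mem_map_equiv.2

theorem Subgroup.eq_top_of_map_equiv_eq_top {K : Subgroup G} (f : G ≃* G')
    (h : K.map f.toMonoidHom = ⊤) : K = ⊤ :=
  Subgroup.map_injective (f := f.toMonoidHom) f.injective
    (h.trans (Subgroup.map_top_of_surjective _ f.surjective).symm)

end Chains

section SumGeneration

variable {α : Type u}

def Equiv.Perm.FixesLargeLeft {β : Type*} (f : Perm (α ⊕ β)) : Prop :=
  ∃ D : Set α, #D = #α ∧ ∀ a ∈ D, f (.inl a) = .inl a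

variable [Infinite α]

theorem exists_fixesLargeLeft_mul_eq (g : Perm (α ⊕ α)) :
    ∃ a c : Perm (α ⊕ α), a.FixesLargeLeft ∧ c.FixesLargeLeft ∧ g = a * c := by
  obtain ⟨p, hp⟩ := exists_fun_forall_mk_preimage_eq (Fin 3) α
  let piece : α ⊕ α → Fin 3 := Sum.elim p p
  -- pigeonhole: a large `FL` on which both `p` and `piece ∘ g ∘ inl` are constant; any third
  -- piece is then disjoint from `inl '' FL` and from its image under `g`
  obtain ⟨⟨i₀, j₀⟩, hFL⟩ := exists_mk_preimage_singleton_eq fun a => (p a, piece (g (.inl a)))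
  set FL := (fun a => (p a, piece (g (.inl a)))) ⁻¹' {(i₀, j₀)}
  have hmemFL : ∀ {a}, a ∈ FL ↔ p a = i₀ ∧ piece (g (.inl a)) = j₀ := by simp [FL]
  have hfresh : ∀ i j : Fin 3, ∃ k, k ≠ i ∧ k ≠ j := by decide
  obtain ⟨i, hi₀, hj₀⟩ := hfresh i₀ j₀
  have hlarge : ∀ (k : Fin 3) (s : Set (α ⊕ α)), piece ⁻¹' {k} ⊆ s → #s = #(α ⊕ α) := by
    refine fun k s hs => mk_eq_of_subset_s1 (s := Sum.inl '' (p ⁻¹' {k}))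
      ((image_subset_iff.2 fun a ha => ha).trans hs) ?_
    rw [mk_image_eq (f := (Sum.inl : α → α ⊕ α)) Sum.inl_injective, hp, mk_sum_self]
  have hcompl : #↥(Sum.inl '' FL ∪ piece ⁻¹' {i})ᶜ = #↥(g '' (Sum.inl '' FL) ∪ piece ⁻¹' {i})ᶜ := by
    obtain ⟨k, hk₀, hk⟩ := hfresh i₀ i
    obtain ⟨k', hk'₀, hk'⟩ := hfresh j₀ i
    rw [hlarge k _ ?_, hlarge k' _ ?_]
    · rintro x (hx : piece x = k') (⟨_, ⟨a, ha, rfl⟩, rfl⟩ | (h : piece x = i))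
      exacts [hk'₀ (hx ▸ (hmemFL.1 ha).2), hk' (hx ▸ h)]
    · rintro x (hx : piece x = k) (⟨a, ha, rfl⟩ | (h : piece x = i))
      exacts [hk₀ (hx ▸ (hmemFL.1 ha).1), hk (hx ▸ h)]
  have hF : Disjoint (Sum.inl '' FL) (piece ⁻¹' {i}) := by
    rw [disjoint_left]
    rintro _ ⟨a, ha, rfl⟩ (h : p a = i)
    exact hi₀ (h ▸ (hmemFL.1 ha).1)
  have hgF : Disjoint (g '' (Sum.inl '' FL)) (piece ⁻¹' {i}) := by
    rw [disjoint_left]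
    rintro _ ⟨_, ⟨a, ha, rfl⟩, rfl⟩ (h : piece _ = i)
    exact hj₀ (h ▸ (hmemFL.1 ha).2)
  obtain ⟨a, c, ha, hc, rfl⟩ := exists_mul_eq_of_disjoint g hF hgF hcompl
  exact ⟨a, c, ⟨p ⁻¹' {i}, hp i, fun x hx => ha _ hx⟩,
    ⟨FL, hFL, fun x hx => hc _ (mem_image_of_mem _ hx)⟩, rfl⟩

variable {K : Subgroup (Perm (α ⊕ α))} {u : Perm (α ⊕ α)} {A : Set α}

theorem mem_of_fixesLargeLeft (hK : ∀ σ : Perm α, Perm.sumCongr σ 1 ∈ K) (hu : u ∈ K)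
    (hA : A.IsMoiety) (huA : u '' range .inr = .inl '' A) {f : Perm (α ⊕ α)}
    (hf : f.FixesLargeLeft) : f ∈ K := by
  obtain ⟨D, hD, hfD⟩ := hf
  obtain ⟨B, hBD, hB⟩ := exists_isMoiety_subset hD
  obtain ⟨σ, hσ⟩ := exists_perm_image_eq (hA.1.trans hB.1.symm) (hA.2.trans hB.2.symm)
  -- `k` maps the right summand into the fixed set of `f`, so `k⁻¹ * f * k` fixes it
  set k := Perm.sumCongr σ 1 * u
  have hk : k ∈ K := mul_mem (hK σ) hu
  have hkf : ∀ b, (k⁻¹ * f * k) (.inr b) = .inr b := by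
    intro b
    obtain ⟨a, ha, hab⟩ : u (.inr b) ∈ Sum.inl '' A := huA ▸ mem_image_of_mem u (mem_range_self b)
    have hka : k (.inr b) = .inl (σ a) := by simp [k, ← hab]
    have hσa : σ a ∈ D := hBD (hσ ▸ mem_image_of_mem σ ha)
    rw [Perm.mul_apply, Perm.mul_apply, hka, hfD _ hσa, ← hka]
    simp
  obtain ⟨ρ, hρ⟩ := Perm.exists_sumCongr_one_eq hkf
  have hconj : f = k * (k⁻¹ * f * k) * k⁻¹ := by group
  rw [hconj, ← hρ]
  exact mul_mem (mul_mem hk (hK ρ)) (inv_mem hk)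

theorem eq_top_of_sumCongr_mem (hK : ∀ σ : Perm α, Perm.sumCongr σ 1 ∈ K) (hu : u ∈ K)
    (hA : A.IsMoiety) (huA : u '' range .inr = .inl '' A) : K = ⊤ := by
  refine (Subgroup.eq_top_iff' K).2 fun g => ?_
  obtain ⟨a, c, ha, hc, rfl⟩ := exists_fixesLargeLeft_mul_eq g
  exact mul_mem (mem_of_fixesLargeLeft hK hu hA huA ha) (mem_of_fixesLargeLeft hK hu hA huA hc)

theorem eventually_eq_top_of_sumCongr_mem {H : ℕ → Subgroup (Perm (α ⊕ α))} (hmono : Monotone H) (hcover : ∀ g, ∃ n, g ∈ H n)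
    (hH : ∀ᶠ n in atTop, ∀ σ : Perm α, Perm.sumCongr σ 1 ∈ H n) : ∀ᶠ n in atTop, H n = ⊤ := by
  obtain ⟨u, A, hA, huA⟩ := exists_perm_image_range_inr α
  filter_upwards [hH, hmono.eventually_mem hcover u] with n hn hu
  exact eq_top_of_sumCongr_mem hn hu hA huA

end SumGeneration

theorem commutatorElement_mul_mul_eq {G : Type*} [Group G] {x y d e : G} (hdy : Commute d y)
    (hde : Commute d e) (hex : Commute e x) : ⁅x * d, y * e⁆ = ⁅x, y⁆ := by
  calc ⁅x * d, y * e⁆ = x * (d * (y * e) * d⁻¹) * x⁻¹ * e⁻¹ * y⁻¹ := by group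
    _ = x * y * (e * x⁻¹) * e⁻¹ * y⁻¹ := by
      rw [(hdy.mul_right hde).eq, mul_inv_cancel_right]; group
    _ = ⁅x, y⁆ := by rw [hex.inv_right.eq]; group

theorem Equiv.Perm.disjoint_of_forall_notMem {α : Type*} {f g : Perm α} {s t : Set α}
    (hst : _root_.Disjoint s t) (hf : ∀ x ∉ s, f x = x) (hg : ∀ x ∉ t, g x = x) :
    f.Disjoint g := fun x =>
  (em (x ∈ s)).elim (fun hx => .inr (hg x (hst.notMem_of_mem_left hx))) fun hx => .inl (hf x hx)

section Fibers

variable {ι Γ : Type*}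

def Equiv.Perm.fiberHom [DecidableEq ι] (i : ι) : Perm Γ →* Perm (ι × Γ) where
  toFun τ := prodCongrRight (Pi.mulSingle i τ)
  map_one' := by ext ⟨j, γ⟩ <;> simp
  map_mul' σ τ := by ext ⟨j, γ⟩ <;> by_cases h : j = i <;> simp [h]

theorem Equiv.Perm.fiberHom_apply [DecidableEq ι] (i : ι) (τ : Perm Γ) (j : ι) (γ : Γ) :
    fiberHom i τ (j, γ) = (j, if j = i then τ γ else γ) := by
  by_cases h : j = i <;> simp [fiberHom, h]

def Subgroup.InducesPermsOnFiber (K : Subgroup (Perm (ι × Γ))) (i : ι) : Prop :=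
  ∀ τ : Perm Γ, ∃ h ∈ K, ∀ γ, h (i, γ) = (i, τ γ)

theorem Subgroup.exists_inducesPermsOnFiber (H : ι → Subgroup (Perm (ι × Γ)))
    (hcover : ∀ g, ∃ i, g ∈ H i) : ∃ i, (H i).InducesPermsOnFiber i := by
  unfold Subgroup.InducesPermsOnFiber
  by_contra! hbad
  choose τ hτ using hbad
  obtain ⟨i, hi⟩ := hcover (prodCongrRight τ)
  obtain ⟨γ, hγ⟩ := hτ i _ hi
  exact hγ rfl

theorem Subgroup.InducesPermsOnFiber.mono {K L : Subgroup (Perm (ι × Γ))} {i : ι}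
    (h : K.InducesPermsOnFiber i) (hKL : K ≤ L) : L.InducesPermsOnFiber i := fun τ =>
  (h τ).imp fun _ ⟨hK, hτ⟩ => ⟨hKL hK, hτ⟩

theorem Subgroup.InducesPermsOnFiber.conj {K : Subgroup (Perm (ι × Γ))} {i : ι}
    (h : K.InducesPermsOnFiber i) {π : Perm ι} (hπ : π.prodCongr (Equiv.refl Γ) ∈ K) :
    K.InducesPermsOnFiber (π i) := by
  intro τ
  obtain ⟨g, hg, hgτ⟩ := h τ
  refine ⟨π.prodCongr (Equiv.refl Γ) * g * (π.prodCongr (Equiv.refl Γ))⁻¹,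
    mul_mem (mul_mem hπ hg) (inv_mem hπ), fun γ => ?_⟩
  simp [Perm.mul_apply, Perm.inv_def, hgτ]

end Fibers

section Galvin

variable {X : Type u}

/-- In `ℕ × GalvinFiber X`, the levels `ℤ × X` of fibre `0` carry the shift of Galvin's trick and
the two copies `Bool × X` are sinks: `dirtSwap φ b` exchanges sink `b` of fibre `0` with the
fibres `n + 1`, so conjugating by it confines to that sink whatever an element does off
fibre `0`. -/
abbrev GalvinFiber (X : Type u) : Type u := (ℤ × X) ⊕ (Bool × X)

def liftCore : Perm (ℤ × X) →* Perm (ℕ × GalvinFiber X) :=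
  (Perm.fiberHom 0).comp ((Perm.sumCongrHom _ _).comp (MonoidHom.inl _ _))

theorem liftCore_apply (τ : Perm (ℤ × X)) (n : ℕ) (γ : GalvinFiber X) :
    liftCore τ (n, γ) = (n, if n = 0 then Sum.map τ id γ else γ) := by
  simp [liftCore, Perm.fiberHom_apply]

theorem liftCore_apply_of_notMem {τ : Perm (ℤ × X)} {q : ℕ × GalvinFiber X}
    (hq : q ∉ range fun p => (0, .inl p)) : liftCore τ q = q := by
  obtain ⟨_ | n, p | c⟩ := q
  · exact absurd ⟨p, rfl⟩ hq
  all_goals simp [liftCore_apply]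

def dirtSwapFun (φ : X ≃ ℕ × GalvinFiber X) (b : Bool) :
    ℕ × GalvinFiber X → ℕ × GalvinFiber X
  | (0, .inl p) => (0, .inl p)
  | (0, .inr (c, a)) => if c = b then ((φ a).1 + 1, (φ a).2) else (0, .inr (c, a))
  | (n + 1, γ) => (0, .inr (b, φ.symm (n, γ)))

theorem dirtSwapFun_involutive (φ : X ≃ ℕ × GalvinFiber X) (b : Bool) :
    Function.Involutive (dirtSwapFun φ b) := by
  rintro ⟨_ | n, p | ⟨c, a⟩⟩
  · rfl
  · by_cases hc : c = b
    · subst hc; simp [dirtSwapFun]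
    · simp [dirtSwapFun, hc]
  all_goals simp [dirtSwapFun]

def dirtSwap (φ : X ≃ ℕ × GalvinFiber X) (b : Bool) : Perm (ℕ × GalvinFiber X) :=
  (dirtSwapFun_involutive φ b).toPerm

theorem commutatorElement_shift (σ : Perm X) :
    ⁅prodCongrRight fun k : ℤ => if 0 ≤ k then σ else 1,
      (Equiv.addRight (1 : ℤ)).prodCongr (Equiv.refl X)⁆ = Perm.fiberHom 0 σ := by
  ext ⟨k, a⟩ <;> simp [commutatorElement_def, Perm.fiberHom_apply]
  split_ifs <;> first | omega | rfl | simp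

variable {K : Subgroup (Perm (ℕ × GalvinFiber X))} {φ : X ≃ ℕ × GalvinFiber X}

theorem exists_mem_eqOn_liftCore (hK : K.InducesPermsOnFiber 0) {b : Bool}
    (hw : dirtSwap φ b ∈ K) (τ : Perm (ℤ × X)) :
    ∃ P ∈ K, EqOn P (liftCore τ) (range fun a => (0, .inr (b, a)))ᶜ := by
  obtain ⟨h, hh, hhτ⟩ := hK (Perm.sumCongr τ 1)
  refine ⟨dirtSwap φ b * h * (dirtSwap φ b)⁻¹, mul_mem (mul_mem hw hh) (inv_mem hw), ?_⟩
  rintro ⟨_ | n, p | ⟨c, a⟩⟩ hq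
  · simp [dirtSwap, dirtSwapFun, Perm.inv_def, hhτ, liftCore_apply]
  · have hc : c ≠ b := by rintro rfl; exact hq ⟨a, rfl⟩
    simp [dirtSwap, dirtSwapFun, Perm.inv_def, hhτ, liftCore_apply, hc]
  all_goals simp [dirtSwap, dirtSwapFun, Perm.inv_def, hhτ, liftCore_apply]

theorem liftCore_fiberHom_mem (hK : K.InducesPermsOnFiber 0) (hw : ∀ b, dirtSwap φ b ∈ K)
    (σ : Perm X) : liftCore (Perm.fiberHom 0 σ) ∈ K := by
  let x : Perm (ℤ × X) := prodCongrRight fun k => if 0 ≤ k then σ else 1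
  let y : Perm (ℤ × X) := (Equiv.addRight 1).prodCongr (Equiv.refl X)
  let core : Set (ℕ × GalvinFiber X) := range fun p => (0, .inl p)
  let sink : Bool → Set (ℕ × GalvinFiber X) := fun b => range fun a => (0, .inr (b, a))
  obtain ⟨P, hP, hPx⟩ := exists_mem_eqOn_liftCore hK (hw true) x
  obtain ⟨Q, hQ, hQy⟩ := exists_mem_eqOn_liftCore hK (hw false) y
  have hd : ∀ q ∉ sink true, ((liftCore x)⁻¹ * P) q = q := fun q hq => by
    simp [Perm.mul_apply, hPx hq]
  have he : ∀ q ∉ sink false, ((liftCore y)⁻¹ * Q) q = q := fun q hq => by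
    simp [Perm.mul_apply, hQy hq]
  have hcore : ∀ τ, ∀ q ∉ core, liftCore τ q = q := fun _ _ => liftCore_apply_of_notMem
  have hsink : ∀ b, Disjoint (sink b) core := fun b => disjoint_range_iff.2 (by simp)
  have hsinks : Disjoint (sink true) (sink false) := disjoint_range_iff.2 (by simp)
  have hPQ : ⁅P, Q⁆ = liftCore (Perm.fiberHom 0 σ) := by
    rw [← commutatorElement_shift, map_commutatorElement,
      ← commutatorElement_mul_mul_eq
        (Perm.disjoint_of_forall_notMem (hsink true) hd (hcore y)).commute
        (Perm.disjoint_of_forall_notMem hsinks hd he).commute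
        (Perm.disjoint_of_forall_notMem (hsink false) he (hcore x)).commute,
      mul_inv_cancel_left, mul_inv_cancel_left]
  rw [← hPQ, commutatorElement_def]
  exact mul_mem (mul_mem (mul_mem hP hQ) (inv_mem hP)) (inv_mem hQ)

theorem eventually_liftCore_fiberHom_mem (φ : X ≃ ℕ × GalvinFiber X)
    {H : ℕ → Subgroup (Perm (ℕ × GalvinFiber X))} (hmono : Monotone H)
    (hcover : ∀ g, ∃ n, g ∈ H n) :
    ∀ᶠ n in atTop, ∀ σ : Perm X, liftCore (Perm.fiberHom 0 σ) ∈ H n := by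
  obtain ⟨i, hi⟩ := Subgroup.exists_inducesPermsOnFiber H hcover
  filter_upwards [eventually_ge_atTop i,
    hmono.eventually_mem hcover ((Equiv.swap i 0).prodCongr (Equiv.refl _)),
    hmono.eventually_mem hcover (dirtSwap φ true), hmono.eventually_mem hcover (dirtSwap φ false)]
    with n hin hπ ht hf σ
  have h0 : (H n).InducesPermsOnFiber 0 := by simpa using (hi.mono (hmono hin)).conj hπ
  exact liftCore_fiberHom_mem h0 (Bool.forall_bool.2 ⟨hf, ht⟩) σ

theorem mk_nat_prod_galvinFiber [Infinite X] : #(ℕ × GalvinFiber X) = #X := by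
  have h := aleph0_le_mk X
  simp [mk_prod, mk_sum, aleph0_mul_eq h, mul_eq_max_of_aleph0_le_right, add_eq_max h, h,
    ofNat_le_aleph0.trans h]

theorem liftCore_fiberHom_apply_of_notMem {σ : Perm X} {q : ℕ × GalvinFiber X}
    (hq : q ∉ range fun a => (0, .inl (0, a))) : liftCore (Perm.fiberHom 0 σ) q = q := by
  obtain ⟨n, (⟨k, a⟩ | c)⟩ := q
  · by_cases h : n = 0 ∧ k = 0
    · obtain ⟨rfl, rfl⟩ := h
      exact absurd ⟨a, rfl⟩ hq
    · rw [not_and_or] at h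
      rcases h with h | h <;> simp [liftCore_apply, Perm.fiberHom_apply, h]
  · simp [liftCore_apply]

theorem exists_equiv_sum_apply_zero_inl_zero [Infinite X] :
    ∃ E : ℕ × GalvinFiber X ≃ X ⊕ X, ∀ a, E (0, .inl (0, a)) = .inl a := by
  refine exists_equiv_sum_apply_inl (fun a b h => by simpa using h) ?_
  rw [mk_eq_of_subset_s1 (s := range fun a => (1, .inl (0, a))) ?_ ?_, mk_nat_prod_galvinFiber]
  · rintro _ ⟨a, rfl⟩ ⟨b, h⟩
    simp at h
  · rw [mk_range_eq _ (fun a b h => by simpa using h), mk_nat_prod_galvinFiber]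

theorem permCongr_liftCore_fiberHom {E : ℕ × GalvinFiber X ≃ X ⊕ X}
    (hE : ∀ a, E (0, .inl (0, a)) = .inl a) (σ : Perm X) :
    E.permCongr (liftCore (Perm.fiberHom 0 σ)) = Perm.sumCongr σ 1 :=
  E.permCongr_eq_sumCongr_one hE (σ := σ) (by simp [liftCore_apply, Perm.fiberHom_apply])
    fun _ => liftCore_fiberHom_apply_of_notMem

end Galvin

theorem Equiv.Perm.exists_eq_top_of_forall_exists_mem {X : Type u} [Infinite X]
    {H : ℕ → Subgroup (Perm X)} (hmono : Monotone H) (hcover : ∀ g, ∃ n, g ∈ H n) :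
    ∃ n, H n = ⊤ := by
  obtain ⟨φ⟩ : Nonempty (X ≃ ℕ × GalvinFiber X) := Cardinal.eq.1 mk_nat_prod_galvinFiber.symm
  obtain ⟨E, hE⟩ := exists_equiv_sum_apply_zero_inl_zero (X := X)
  let HY n := (H n).map (permCongrHom φ).toMonoidHom
  have hmonoY : Monotone HY := hmono.map_equiv _
  have hcoverY := Subgroup.exists_mem_map_equiv hcover (permCongrHom φ)
  have hS := eventually_eq_top_of_sumCongr_mem (hmonoY.map_equiv (permCongrHom E))
    (Subgroup.exists_mem_map_equiv hcoverY _) <|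
    (eventually_liftCore_fiberHom_mem φ hmonoY hcoverY).mono fun n hn σ => by
      rw [← permCongr_liftCore_fiberHom hE σ]
      exact Subgroup.mem_map_of_mem _ (hn σ)
  obtain ⟨n, hn⟩ := hS.exists
  exact ⟨n, Subgroup.eq_top_of_map_equiv_eq_top _ (Subgroup.eq_top_of_map_equiv_eq_top _ hn)⟩

theorem exists_stage_generating_general {Ω : Type*} [Infinite Ω]
    (S : Set (Equiv.Perm Ω)) (hS : Subgroup.closure S = ⊤)
    (a : ℕ → Equiv.Perm Ω) :
    ∃ n : ℕ, Subgroup.closure ((S \ Set.range a) ∪ (a '' {i | i ≤ n})) = ⊤ := by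
  set H : ℕ → Subgroup (Perm Ω) := fun n => Subgroup.closure ((S \ range a) ∪ (a '' {i | i ≤ n}))
  have hmono : Monotone H := fun m n hmn =>
    Subgroup.closure_mono (union_subset_union_right _ (image_mono fun i hi => le_trans hi hmn))
  have hS_le : Subgroup.closure S ≤ ⨆ n, H n := by
    refine (Subgroup.closure_le _).2 fun s hs => ?_
    by_cases hsa : s ∈ range a
    · obtain ⟨i, rfl⟩ := hsa
      exact Subgroup.mem_iSup_of_mem i (Subgroup.subset_closure (.inr ⟨i, le_refl i, rfl⟩))
    · exact Subgroup.mem_iSup_of_mem 0 (Subgroup.subset_closure (.inl ⟨hs, hsa⟩))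
  exact Perm.exists_eq_top_of_forall_exists_mem hmono fun g =>
    (Subgroup.mem_iSup_of_directed hmono.directed_le).1 (hS_le (hS ▸ Subgroup.mem_top g))

theorem exists_stage_generating {Ω : Type*} [Infinite Ω]
    (S : Set (Equiv.Perm Ω)) (hS : Subgroup.closure S = ⊤)
    (a : ℕ → Equiv.Perm Ω) (ha : Function.Injective a) (haS : Set.range a ⊆ S) :
    ∃ n : ℕ, Subgroup.closure ((S \ Set.range a) ∪ (a '' {i | i ≤ n})) = ⊤ :=
  exists_stage_generating_general S hS a
end

section
/- For any infinite set Ω and any natural number n ≥ 2, the set I_n of all elements of order exactly n in S(Ω) generates S(Ω). -/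
/-!
Every permutation is a product of two involutions (reflect each cycle about a base point), so it
suffices to treat an involution `σ`. If `h` has order `n`, then
`⁅h, c⁆ = h * (c * h⁻¹ * c⁻¹)` is a product of two elements of order `n`. Let `c` swap half of the
pairs of `σ`, and let `h` carry them onto the other half along `n`-cycles whose remaining `n - 2`
points are fixed by `σ`; then `⁅h, c⁆ = σ`. Such an `h` exists when `σ` swaps infinitely many pairs
and fixes at least as many points. Every involution is a product of two of this kind: split its
pairs in two halves if they outnumber its fixed points, and otherwise multiply it by an involution
swapping fixed points.
-/

open Equiv Function Cardinal Set
open scoped commutatorElement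

universe u

theorem commutatorElement_mem_closure_orderOf {G : Type*} [Group G] {n : ℕ} {h : G}
    (hh : orderOf h = n) (c : G) : ⁅h, c⁆ ∈ Subgroup.closure {g : G | orderOf g = n} := by
  rw [show ⁅h, c⁆ = h * (c * h⁻¹ * c⁻¹) by group]
  refine mul_mem (Subgroup.subset_closure hh) (Subgroup.subset_closure ?_)
  change orderOf (c * h⁻¹ * c⁻¹) = n
  rw [← MulAut.conj_apply, MulEquiv.orderOf_eq, orderOf_inv, hh]

theorem orderOf_finRotate {n : ℕ} (hn : 2 ≤ n) : orderOf (finRotate n) = n := by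
  rw [← Perm.lcm_cycleType, cycleType_finRotate_of_le hn, Multiset.lcm_singleton, normalize_eq]

theorem Cardinal.mk_le_mk_compl_of_injective {α β : Type u} {s : Set β} {f : α → β}
    (hf : Injective f) (hs : ∀ a, f a ∉ s) : #α ≤ #(sᶜ : Set β) :=
  (mk_range_eq f hf).symm.le.trans (mk_le_mk_of_subset (range_subset_iff.2 hs))

namespace Equiv.Perm

section

variable {Ω P Q : Type*}

theorem orderOf_prodCongr_refl {α β : Type*} [Nonempty β] (p : Perm α) :
    orderOf (p.prodCongr (Equiv.refl β)) = orderOf p := by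
  let φ : Perm α →* Perm (α × β) :=
    { toFun := fun q => q.prodCongr (Equiv.refl β), map_one' := rfl, map_mul' := fun _ _ => rfl }
  refine orderOf_injective φ (fun q r h => ext fun a => ?_) p
  obtain ⟨b⟩ := ‹Nonempty β›
  exact congrArg Prod.fst (congr($h (a, b)))

theorem exists_involutive_mul_eq (g : Perm Ω) :
    ∃ σ τ : Perm Ω, Involutive σ ∧ Involutive τ ∧ σ * τ = g := by
  let r : Ω → Ω := fun x => (Quotient.mk (SameCycle.setoid g) x).out
  have hr_eq {x y : Ω} (h : SameCycle g x y) : r x = r y := congrArg Quotient.out (Quotient.sound h)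
  choose k hk using fun x => (Quotient.mk_out (s := SameCycle.setoid g) x : SameCycle g (r x) x)
  let σf : Ω → Ω := fun x => (g ^ (-k x)) (r x)
  have hσf {x : Ω} {j : ℤ} (h : (g ^ j) (r x) = x) : σf x = (g ^ (-j)) (r x) := by
    have := congrArg (g ^ (-k x - j)) ((hk x).trans h.symm)
    rwa [← mul_apply, ← mul_apply, ← zpow_add, ← zpow_add, show -k x - j + k x = -j by ring,
      show -k x - j + j = -k x by ring, eq_comm] at this
  have hr_σf (x : Ω) : r (σf x) = r x := (hr_eq ⟨-k x, rfl⟩).symm.trans (hr_eq ⟨k x, hk x⟩)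
  have hσ : Involutive σf := fun x => by
    rw [hσf (j := -k x) (by rw [hr_σf]), hr_σf, neg_neg, hk]
  have hσg (x : Ω) : σf (g x) = g⁻¹ (σf x) := by
    have hrg : r (g x) = r x := (hr_eq ⟨1, by simp⟩).symm
    rw [hσf (j := 1 + k x) (by rw [hrg, zpow_add, mul_apply, hk, zpow_one]), hrg, neg_add,
      zpow_add, zpow_neg_one, mul_apply]
  refine ⟨hσ.toPerm, hσ.toPerm * g, hσ, fun x => ?_, ?_⟩
  · change σf (g (σf (g x))) = x
    rw [hσg, hσ]
    exact g.symm_apply_apply x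
  · ext x
    exact hσ (g x)

noncomputable def pairInvol (E : P × Bool ↪ Ω) : Perm Ω :=
  Perm.viaEmbedding ((Equiv.refl P).prodCongr boolNot) E

def pairRestrict (E : P × Bool ↪ Ω) (f : Q ↪ P) : Q × Bool ↪ Ω :=
  (f.prodMap (Embedding.refl Bool)).trans E

@[simp]
theorem pairRestrict_apply (E : P × Bool ↪ Ω) (f : Q ↪ P) (q : Q) (s : Bool) :
    pairRestrict E f (q, s) = E (f q, s) := rfl

theorem range_pairRestrict_subset (E : P × Bool ↪ Ω) (f : Q ↪ P) :
    range (pairRestrict E f) ⊆ range E :=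
  range_comp_subset_range _ E

@[simp]
theorem pairInvol_apply (E : P × Bool ↪ Ω) (p : P) (s : Bool) :
    pairInvol E (E (p, s)) = E (p, !s) :=
  viaEmbedding_apply _ _ _

theorem pairInvol_apply_of_notMem (E : P × Bool ↪ Ω) {x : Ω} (hx : x ∉ range E) :
    pairInvol E x = x :=
  viaEmbedding_apply_of_notMem _ _ _ hx

theorem eq_pairInvol (E : P × Bool ↪ Ω) {σ : Perm Ω} (hE : ∀ p s, σ (E (p, s)) = E (p, !s))
    (hfix : ∀ x ∉ range E, σ x = x) : σ = pairInvol E := by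
  ext x
  by_cases hx : x ∈ range E
  · obtain ⟨⟨p, s⟩, rfl⟩ := hx
    rw [hE, pairInvol_apply]
  · rw [hfix x hx, pairInvol_apply_of_notMem E hx]

theorem pairInvol_mul_self (E : P × Bool ↪ Ω) : pairInvol E * pairInvol E = 1 := by
  ext x
  by_cases hx : x ∈ range E
  · obtain ⟨⟨p, s⟩, rfl⟩ := hx
    simp
  · simp [pairInvol_apply_of_notMem E hx]

theorem conj_pairInvol (h : Perm Ω) (E : P × Bool ↪ Ω) :
    h * pairInvol E * h⁻¹ = pairInvol (E.trans h.toEmbedding) := by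
  refine eq_pairInvol _ (fun p s => by simp) fun x hx => ?_
  have : h⁻¹ x ∉ range E := fun ⟨y, hy⟩ => hx ⟨y, by simp [hy]⟩
  rw [mul_apply, mul_apply, pairInvol_apply_of_notMem E this]
  exact h.apply_symm_apply x

theorem pairInvol_eq_mul {Q₁ Q₂ : Type*} (E : P × Bool ↪ Ω) (f₁ : Q₁ ↪ P) (f₂ : Q₂ ↪ P)
    (hdisj : ∀ q₁ q₂, f₁ q₁ ≠ f₂ q₂) (hcover : ∀ p, p ∈ range f₁ ∨ p ∈ range f₂) :
    pairInvol E = pairInvol (pairRestrict E f₁) * pairInvol (pairRestrict E f₂) := by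
  have hE₁ : ∀ q s, E (f₁ q, s) ∉ range (pairRestrict E f₂) := fun q s ⟨⟨q', s'⟩, h⟩ =>
    hdisj q q' (congrArg Prod.fst (E.injective h)).symm
  have hE₂ : ∀ q s, E (f₂ q, s) ∉ range (pairRestrict E f₁) := fun q s ⟨⟨q', s'⟩, h⟩ =>
    hdisj q' q (congrArg Prod.fst (E.injective h))
  refine (eq_pairInvol _ (fun p s => ?_) fun x hx => ?_).symm
  · rcases hcover p with ⟨q, rfl⟩ | ⟨q, rfl⟩
    · rw [mul_apply, pairInvol_apply_of_notMem _ (hE₁ q s), ← pairRestrict_apply,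
        pairInvol_apply, pairRestrict_apply]
    · rw [mul_apply, ← pairRestrict_apply, pairInvol_apply, pairRestrict_apply,
        pairInvol_apply_of_notMem _ (hE₂ q !s)]
  · rw [mul_apply, pairInvol_apply_of_notMem _ fun h => hx (range_pairRestrict_subset E f₂ h),
      pairInvol_apply_of_notMem _ fun h => hx (range_pairRestrict_subset E f₁ h)]

theorem pairInvol_mul_pairInvol_mem_closure {n : ℕ} {h : Perm Ω} (hh : orderOf h = n)
    (E₀ E₁ : P × Bool ↪ Ω) (hE : ∀ x, h (E₀ x) = E₁ x) :
    pairInvol E₁ * pairInvol E₀ ∈ Subgroup.closure {f : Perm Ω | orderOf f = n} := by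
  have : E₁ = E₀.trans h.toEmbedding := by ext x; exact (hE x).symm
  rw [this, ← conj_pairInvol, ← inv_eq_of_mul_eq_one_right (pairInvol_mul_self E₀)]
  exact commutatorElement_mem_closure_orderOf hh _

/-- The witness cycles `E (0, y) ↦ E (1, y) ↦ G (0, y) ↦ ⋯ ↦ G (m - 1, y) ↦ E (0, y)`. -/
theorem exists_orderOf_eq_apply_eq {Y : Type*} [Nonempty Y] (m : ℕ) (E : Fin 2 × Y ↪ Ω)
    (G : Fin m × Y ↪ Ω) (hEG : ∀ a b, E a ≠ G b) :
    ∃ h : Perm Ω, orderOf h = 2 + m ∧ ∀ y, h (E (0, y)) = E (1, y) := by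
  let ρ : Perm (Fin 2 ⊕ Fin m) := finSumFinEquiv.symm.permCongr (finRotate (2 + m))
  have hρ : ρ (.inl 0) = .inl 1 := by
    simp only [ρ, permCongr_apply, symm_symm, finSumFinEquiv_apply_left, finRotate_apply]
    rw [show Fin.castAdd m (0 : Fin 2) + 1 = Fin.castAdd m 1 from
        Fin.ext (by simp [Fin.val_add, Nat.one_mod_eq_one]; omega),
      finSumFinEquiv_symm_apply_castAdd]
  let F : (Fin 2 ⊕ Fin m) × Y ↪ Ω := (sumProdDistrib _ _ _).toEmbedding.trans
    ⟨Sum.elim E G, E.injective.sumElim G.injective hEG⟩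
  refine ⟨viaEmbedding (ρ.prodCongr (Equiv.refl Y)) F, ?_, fun y => ?_⟩
  · rw [← viaEmbeddingHom_apply, orderOf_injective _ (viaEmbeddingHom_injective F),
      orderOf_prodCongr_refl, show ρ = finSumFinEquiv.symm.permCongrHom _ from rfl,
      MulEquiv.orderOf_eq, orderOf_finRotate (by omega)]
  · have := viaEmbedding_apply (ρ.prodCongr (Equiv.refl Y)) F (.inl 0, y)
    rwa [prodCongr_apply, Prod.map_apply, hρ] at this

theorem exists_pairInvol_eq_mul_halves [Infinite P] (E : P × Bool ↪ Ω) :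
    ∃ H : Fin 2 × (P × Bool) ↪ Ω, range H = range E ∧
      pairInvol E = pairInvol ((Embedding.sectR 1 _).trans H) *
        pairInvol ((Embedding.sectR 0 _).trans H) := by
  obtain ⟨ε⟩ : Nonempty (Fin 2 × P ≃ P) := Cardinal.eq.1 <| by
    rw [mk_prod, lift_uzero, mk_fin, lift_natCast]
    exact Cardinal.mul_eq_right (aleph0_le_mk P) (natCast_lt_aleph0.le.trans (aleph0_le_mk P))
      two_ne_zero
  let e : Fin 2 × (P × Bool) ≃ P × Bool := (prodAssoc _ _ _).symm.trans (ε.prodCongr (.refl _))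
  refine ⟨e.toEmbedding.trans E, EquivLike.range_comp E e, ?_⟩
  refine pairInvol_eq_mul E ((Embedding.sectR 1 P).trans ε.toEmbedding)
    ((Embedding.sectR 0 P).trans ε.toEmbedding) (fun p q h => ?_) fun p => ?_
  · simpa using congrArg Prod.fst (ε.injective h)
  · obtain ⟨⟨j, q⟩, rfl⟩ := ε.surjective p
    fin_cases j
    exacts [.inr ⟨q, rfl⟩, .inl ⟨q, rfl⟩]

end

section

variable {n : ℕ} {Ω P : Type u}

theorem exists_eq_pairInvol {σ : Perm Ω} (hσ : Involutive σ) :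
    ∃ (P : Type u) (E : P × Bool ↪ Ω), σ = pairInvol E := by
  let _ : LinearOrder Ω := IsWellOrder.linearOrder WellOrderingRel
  let f : {x // x < σ x} × Bool → Ω := fun p => cond p.2 (σ p.1) p.1
  have hf : Injective f := by
    rintro ⟨⟨x, hx⟩, _ | _⟩ ⟨⟨y, hy⟩, _ | _⟩ h <;> simp only [f, cond_false, cond_true] at h
    · simp [h]
    · rw [h, hσ y] at hx
      exact absurd hx (lt_asymm hy)
    · rw [← h, hσ x] at hy
      exact absurd hy (lt_asymm hx)
    · simp [σ.injective h]
  refine ⟨_, ⟨f, hf⟩, eq_pairInvol _ (fun p s => ?_) fun x hx => ?_⟩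
  · cases s
    · rfl
    · exact hσ _
  · by_contra hne
    rcases lt_or_gt_of_ne (Ne.symm hne) with h | h
    · exact hx ⟨(⟨x, h⟩, false), rfl⟩
    · exact hx ⟨(⟨σ x, by rwa [hσ x]⟩, true), hσ x⟩

theorem pairInvol_mem_closure_of_mk_le_compl (hn : 2 ≤ n) [Infinite P] (E : P × Bool ↪ Ω)
    (hP : #P ≤ #((range E)ᶜ : Set Ω)) :
    pairInvol E ∈ Subgroup.closure {f : Perm Ω | orderOf f = n} := by
  obtain ⟨m, rfl⟩ := Nat.exists_eq_add_of_le hn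
  obtain ⟨H, hH, hE⟩ := exists_pairInvol_eq_mul_halves E
  have hfresh : #(Fin m × (P × Bool)) ≤ #P := by
    have hP₀ := aleph0_le_mk P
    simp only [mk_prod, mk_fintype, Fintype.card_fin, lift_natCast, lift_uzero, Fintype.card_bool,
      Nat.cast_ofNat, lift_ofNat]
    exact mul_le_of_le hP₀ (natCast_lt_aleph0.le.trans hP₀)
      (mul_le_of_le hP₀ le_rfl (natCast_lt_aleph0.le.trans hP₀))
  obtain ⟨G⟩ := (Cardinal.le_def _ _).1 (hfresh.trans hP)
  obtain ⟨h, hh, hH0⟩ := exists_orderOf_eq_apply_eq m H (G.trans (Embedding.subtype _))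
    fun a b hab => (G b).2 (hH.subset ⟨a, hab⟩)
  rw [hE]
  exact pairInvol_mul_pairInvol_mem_closure hh _ _ hH0

theorem pairInvol_mem_closure_of_infinite (hn : 2 ≤ n) [Infinite P] (E : P × Bool ↪ Ω) :
    pairInvol E ∈ Subgroup.closure {f : Perm Ω | orderOf f = n} := by
  obtain ⟨H, -, hE⟩ := exists_pairInvol_eq_mul_halves E
  have hhalf (i j : Fin 2) (hij : i ≠ j) :
      #P ≤ #((range ((Embedding.sectR i _).trans H))ᶜ : Set Ω) :=
    mk_le_mk_compl_of_injective (f := fun p => H (j, p, false))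
      (fun p q h => by simpa using H.injective h)
      fun p ⟨y, hy⟩ => hij (congrArg Prod.fst (H.injective hy))
  rw [hE]
  exact mul_mem (pairInvol_mem_closure_of_mk_le_compl hn _ (hhalf 1 0 one_ne_zero))
    (pairInvol_mem_closure_of_mk_le_compl hn _ (hhalf 0 1 zero_ne_one))

theorem pairInvol_mem_closure_of_infinite_compl (hn : 2 ≤ n) (E : P × Bool ↪ Ω)
    [Infinite ((range E)ᶜ : Set Ω)] (hP : #P ≤ #((range E)ᶜ : Set Ω)) :
    pairInvol E ∈ Subgroup.closure {f : Perm Ω | orderOf f = n} := by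
  set F := ((range E)ᶜ : Set Ω)
  have hF := aleph0_le_mk F
  obtain ⟨δ⟩ : Nonempty ((F × Bool) ⊕ F ≃ F) := Cardinal.eq.1 <| by
    simp only [mk_sum, mk_prod, lift_uzero, mk_fintype, Fintype.card_bool, Nat.cast_ofNat,
      lift_ofNat, lift_id]
    rw [Cardinal.mul_eq_left hF (ofNat_le_aleph0.trans hF) two_ne_zero, add_eq_self hF]
  let C : F × Bool ↪ Ω := (Embedding.inl.trans δ.toEmbedding).trans (Embedding.subtype _)
  let E' : (P ⊕ F) × Bool ↪ Ω := (sumProdDistrib _ _ _).toEmbedding.trans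
    ⟨Sum.elim E C, E.injective.sumElim C.injective fun a b h => (δ (.inl b)).2 ⟨a, h⟩⟩
  have hE' : pairInvol E' = pairInvol E * pairInvol C :=
    pairInvol_eq_mul E' .inl .inr (fun _ _ => Sum.inl_ne_inr) fun p => by
      rcases p with p | p
      exacts [.inl ⟨p, rfl⟩, .inr ⟨p, rfl⟩]
  have hfresh : Injective fun f => (δ (.inr f) : Ω) :=
    Subtype.val_injective.comp (δ.injective.comp Sum.inr_injective)
  have hfreshC : ∀ f, (δ (.inr f) : Ω) ∉ range C := fun f ⟨b, hb⟩ =>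
    Sum.inl_ne_inr (δ.injective (Subtype.ext hb))
  have hfreshE' : ∀ f, (δ (.inr f) : Ω) ∉ range E' := by
    rintro f ⟨⟨p | p, s⟩, hp⟩
    exacts [(δ (.inr f)).2 ⟨_, hp⟩, hfreshC f ⟨_, hp⟩]
  rw [← mul_inv_eq_iff_eq_mul.2 hE']
  refine mul_mem (pairInvol_mem_closure_of_mk_le_compl hn E' ?_)
    (inv_mem (pairInvol_mem_closure_of_mk_le_compl hn C
      (mk_le_mk_compl_of_injective hfresh hfreshC)))
  rw [mk_sum, lift_id, lift_id, add_eq_right hF hP]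
  exact mk_le_mk_compl_of_injective hfresh hfreshE'

theorem aleph0_le_max_mk_compl_range [Infinite Ω] (E : P × Bool ↪ Ω) :
    ℵ₀ ≤ max #P #((range E)ᶜ : Set Ω) := by
  by_contra! h
  rw [max_lt_iff, lt_aleph0_iff_finite, lt_aleph0_iff_finite] at h
  obtain ⟨_, _⟩ := h
  have := (finite_range E).union (toFinite (range E)ᶜ)
  rw [union_compl_self] at this
  exact infinite_univ this

theorem pairInvol_mem_closure (hn : 2 ≤ n) [Infinite Ω] (E : P × Bool ↪ Ω) :
    pairInvol E ∈ Subgroup.closure {f : Perm Ω | orderOf f = n} := by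
  have hmax := aleph0_le_max_mk_compl_range E
  rcases le_or_gt #P #((range E)ᶜ : Set Ω) with hle | hlt
  · have : Infinite ((range E)ᶜ : Set Ω) := Cardinal.infinite_iff.2 (max_eq_right hle ▸ hmax)
    exact pairInvol_mem_closure_of_infinite_compl hn E hle
  · have : Infinite P := Cardinal.infinite_iff.2 (max_eq_left hlt.le ▸ hmax)
    exact pairInvol_mem_closure_of_infinite hn E

end

end Equiv.Perm

open Equiv.Perm

theorem orderN_generates {Ω : Type*} [Infinite Ω] (n : ℕ) (hn : 2 ≤ n) :
    Subgroup.closure {f : Equiv.Perm Ω | orderOf f = n} = ⊤ := by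
  refine eq_top_iff.2 fun g _ => ?_
  obtain ⟨σ, τ, hσ, hτ, rfl⟩ := exists_involutive_mul_eq g
  obtain ⟨P, E, rfl⟩ := exists_eq_pairInvol hσ
  obtain ⟨Q, F, rfl⟩ := exists_eq_pairInvol hτ
  exact mul_mem (pairInvol_mem_closure hn E) (pairInvol_mem_closure hn F)
end

section
/- For an infinite set Ω and infinite cardinals α < β ≤ |Ω|, S_{|Ω|,α}(Ω) ⊆ S_{|Ω|,β}(Ω). -/
open Cardinal

universe u

/-- `V` is a decomposition of the support of `f` into pairwise disjoint `f`-invariant sets. -/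
def IsInvDecomp {Ω : Type u} (f : Equiv.Perm Ω) {ι : Type u} (V : ι → Set Ω) : Prop :=
  (∀ i, ∀ x ∈ V i, f x ∈ V i) ∧ Pairwise (Function.onFun Disjoint V) ∧
    (⋃ i, V i) = {x | f x ≠ x}

/-- at most `α` invariant pieces, each of cardinality at most `β`. -/
def Wset (Ω : Type u) (α β : Cardinal.{u}) : Set (Equiv.Perm Ω) :=
  {f | ∃ (ι : Type u) (V : ι → Set Ω), IsInvDecomp f V ∧ #ι ≤ α ∧ ∀ i, #(V i) ≤ β}

/-- exactly `α` invariant pieces, each of cardinality at most `β`. -/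
def Kset (Ω : Type u) (α β : Cardinal.{u}) : Set (Equiv.Perm Ω) :=
  {f | ∃ (ι : Type u) (V : ι → Set Ω), IsInvDecomp f V ∧ #ι = α ∧ ∀ i, #(V i) ≤ β}

/-- at most `α` invariant pieces, each of cardinality exactly `β`. -/
def Rset (Ω : Type u) (α β : Cardinal.{u}) : Set (Equiv.Perm Ω) :=
  {f | ∃ (ι : Type u) (V : ι → Set Ω), IsInvDecomp f V ∧ #ι ≤ α ∧ ∀ i, #(V i) = β}

/-- exactly `α` invariant pieces, each of cardinality exactly `β`. -/
def Sset (Ω : Type u) (α β : Cardinal.{u}) : Set (Equiv.Perm Ω) :=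
  {f | ∃ (ι : Type u) (V : ι → Set Ω), IsInvDecomp f V ∧ #ι = α ∧ ∀ i, #(V i) = β}

theorem Sset_mono_right {Ω : Type u} [Infinite Ω] (α β : Cardinal.{u})
    (hα : ℵ₀ ≤ α) (hαβ : α < β) (hβ : β ≤ #Ω) :
    Sset Ω (#Ω) α ⊆ Sset Ω (#Ω) β := by
  rintro f ⟨ι, V, ⟨hinv, hdisj, hcover⟩, hι, hV⟩
  have hβ0 : ℵ₀ ≤ β := hα.trans hαβ.le
  set τ := β.out with hτdef
  have hτ : #τ = β := Cardinal.mk_out β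
  have hne : Nonempty τ := Cardinal.mk_ne_zero_iff.mp (by rw [hτ]; exact (aleph0_pos.trans_le hβ0).ne')
  have hcard : #ι = #(Ω × τ) := by
    rw [Cardinal.mk_prod, Cardinal.lift_id, Cardinal.lift_id, hτ, hι,
      Cardinal.mul_eq_left (Cardinal.aleph0_le_mk Ω) hβ
        (by exact (aleph0_pos.trans_le hβ0).ne')]
  obtain ⟨e⟩ := Cardinal.eq.mp hcard.symm
  have hVne : ∀ i, (V i).Nonempty := fun i => by
    rw [← Set.nonempty_coe_sort]
    exact Cardinal.mk_ne_zero_iff.mp (by rw [hV]; exact (aleph0_pos.trans_le hα).ne')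
  refine ⟨Ω, fun s => ⋃ t, V (e (s, t)), ⟨?_, ?_, ?_⟩, rfl, ?_⟩
  · intro s x hx
    simp only [Set.mem_iUnion] at hx ⊢
    obtain ⟨t, ht⟩ := hx
    exact ⟨t, hinv _ x ht⟩
  · intro s s' hss
    rw [Function.onFun, Set.disjoint_left]
    intro x hx hx'
    simp only [Set.mem_iUnion] at hx hx'
    obtain ⟨t, ht⟩ := hx
    obtain ⟨t', ht'⟩ := hx'
    have hne2 : e (s, t) ≠ e (s', t') := fun h => hss (congrArg Prod.fst (e.injective h))
    exact Set.disjoint_left.mp (hdisj hne2) ht ht'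
  · ext x
    rw [← hcover]
    simp only [Set.mem_iUnion]
    constructor
    · rintro ⟨s, t, h⟩; exact ⟨e (s, t), h⟩
    · rintro ⟨i, h⟩
      refine ⟨(e.symm i).1, (e.symm i).2, ?_⟩
      simpa using h
  · intro s
    apply le_antisymm
    · calc #(⋃ t, V (e (s, t))) ≤ #τ * ⨆ t, #(V (e (s, t))) := Cardinal.mk_iUnion_le _
        _ ≤ β * α := by
            rw [hτ]
            exact mul_le_mul_right (ciSup_le fun t => (hV _).le) β
        _ = β := by rw [Cardinal.mul_eq_max hβ0 hα, max_eq_left hαβ.le]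
    · choose g hg using fun t : τ => hVne (e (s, t))
      have hF : Function.Injective
          (fun t : τ => (⟨g t, Set.mem_iUnion.mpr ⟨t, hg t⟩⟩ : ↥(⋃ t, V (e (s, t))))) := by
        intro t t' h
        by_contra hne3
        have hne4 : e (s, t) ≠ e (s, t') := fun h2 => hne3 (congrArg Prod.snd (e.injective h2))
        have : g t = g t' := congrArg Subtype.val h
        exact Set.disjoint_left.mp (hdisj hne4) (hg t) (this ▸ hg t')
      calc β = #τ := hτ.symm
        _ ≤ _ := Cardinal.mk_le_of_injective hF
end

section
/- For an infinite set Ω and any natural number n ≥ 2, every permutation of order n lies in the subgroup generated by S_{|Ω|,n}(Ω), i.e. ⟨I_n⟩ ⊆ ⟨S_{|Ω|,n}(Ω)⟩. -/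
open Cardinal

universe u

/-!
A permutation `f` with `f ^ n = 1` is the product of its restrictions to the sets of points of a
fixed minimal period `d`, and every such `d` divides `n`; so it suffices to treat a permutation `h`
all of whose orbits in its support have length `d`. These orbits are `κ` invariant pieces of
size `d`. If `κ = #Ω`, regrouping them `n / d` at a time (possible since `κ * (n / d) = κ`) puts
`h` in `Sset Ω #Ω n`. Otherwise the support of `h` is small, so its complement has cardinality
`#Ω` and carries a permutation `g` with `#Ω` orbits of length `d`; then `h * g` and `g` both
lie in `Sset Ω #Ω n`, and `h = (h * g) * g⁻¹`.
-/

section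

open Equiv Function MulAction Subgroup

variable {Ω : Type u}

theorem IsInvDecomp.subset_support {f : Perm Ω} {ι : Type u} {V : ι → Set Ω}
    (hV : IsInvDecomp f V) (i : ι) : V i ⊆ {x | f x ≠ x} :=
  hV.2.2 ▸ Set.subset_iUnion V i

theorem isInvDecomp_orbits (h : Perm Ω) :
    IsInvDecomp h
      (Subtype.val : {s : Set Ω // ∃ x, h x ≠ x ∧ orbit (zpowers h) x = s} → Set Ω) := by
  refine ⟨?_, ?_, ?_⟩
  · rintro ⟨_, x, _, rfl⟩ y hy
    exact mem_orbit_of_mem_orbit ⟨h, mem_zpowers h⟩ hy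
  · rintro ⟨_, x, _, rfl⟩ ⟨_, y, _, rfl⟩ hne
    exact (orbit.eq_or_disjoint x y).resolve_left fun heq => hne (Subtype.ext heq)
  · ext y
    simp only [Set.mem_iUnion, Set.mem_ofPred_eq, Subtype.exists, exists_prop]
    constructor
    · rintro ⟨_, ⟨x, hx, rfl⟩, ⟨⟨_, k, rfl⟩, rfl⟩⟩
      exact (Perm.SameCycle.apply_eq_self_iff ⟨k, rfl⟩).not.1 hx
    · exact fun hy => ⟨_, ⟨y, hy, rfl⟩, mem_orbit_self y⟩

theorem mk_orbit_zpowers (h : Perm Ω) {x : Ω} (hx : minimalPeriod h x ≠ 0) :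
    #(orbit (zpowers h) x) = minimalPeriod h x := by
  have : NeZero (minimalPeriod h x) := ⟨hx⟩
  simpa [Cardinal.mk_fintype, ZMod.card] using Cardinal.lift_mk_eq'.2 ⟨orbitZPowersEquiv h x⟩

theorem exists_mem_Sset_of_minimalPeriod_eq {h : Perm Ω} {d : ℕ} (hd : d ≠ 0)
    (hper : ∀ x, h x ≠ x → minimalPeriod h x = d) : ∃ κ, h ∈ Sset Ω κ d := by
  refine ⟨_, _, _, isInvDecomp_orbits h, rfl, ?_⟩
  rintro ⟨_, x, hx, rfl⟩
  rw [mk_orbit_zpowers h (hper x hx ▸ hd), hper x hx]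

theorem mk_support_of_mem_Sset {f : Perm Ω} {κ β : Cardinal.{u}} (hf : f ∈ Sset Ω κ β) :
    #{x | f x ≠ x} = κ * β := by
  obtain ⟨ι, V, hV, rfl, hβ⟩ := hf
  rw [← hV.2.2, Cardinal.mk_iUnion_eq_sum_mk hV.2.1, funext hβ, Cardinal.sum_const']

theorem mem_Sset_natCast_mul {f : Perm Ω} {κ β : Cardinal.{u}} (hf : f ∈ Sset Ω κ β)
    (hκ : ℵ₀ ≤ κ) {m : ℕ} (hm : m ≠ 0) : f ∈ Sset Ω κ (m * β) := by
  obtain ⟨ι, V, hV, rfl, hβ⟩ := hf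
  obtain ⟨e⟩ : Nonempty (ι × Fin m ≃ ι) := Cardinal.eq.1 <| by
    simpa using Cardinal.mul_eq_left hκ ((Cardinal.natCast_lt_aleph0 (n := m)).le.trans hκ)
      (by simpa using hm)
  refine ⟨ι, fun j => ⋃ k : Fin m, V (e (j, k)), ⟨?_, ?_, ?_⟩, rfl, fun j => ?_⟩
  · intro j x hx
    obtain ⟨k, hk⟩ := Set.mem_iUnion.1 hx
    exact Set.mem_iUnion.2 ⟨k, hV.1 _ x hk⟩
  · intro j j' hne
    refine Set.disjoint_iUnion_left.2 fun k => Set.disjoint_iUnion_right.2 fun k' => ?_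
    exact hV.2.1 (e.injective.ne fun h => hne (congrArg Prod.fst h))
  · rw [← hV.2.2, ← e.surjective.iUnion_comp V, Set.iUnion_prod']
  · have := Cardinal.mk_iUnion_eq_sum_mk_lift (f := fun k : Fin m => V (e (j, k)))
      fun k k' hne => hV.2.1 (e.injective.ne fun h => hne (congrArg Prod.snd h))
    simpa [hβ, Cardinal.sum_const] using this

theorem mul_mem_Sset_add {f g : Perm Ω} {κ κ' β : Cardinal.{u}} (hf : f ∈ Sset Ω κ β)
    (hg : g ∈ Sset Ω κ' β) (hfg : f.Disjoint g) : f * g ∈ Sset Ω (κ + κ') β := by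
  obtain ⟨ι, V, hV, rfl, hβ⟩ := hf
  obtain ⟨ι', W, hW, rfl, hβ'⟩ := hg
  have hsupp : Disjoint {x | f x ≠ x} {x | g x ≠ x} :=
    Set.disjoint_left.2 fun x hfx hgx => (hfg x).elim hfx hgx
  have hfix_g : ∀ i, ∀ x ∈ V i, g x = x := fun i x hx =>
    (hfg x).resolve_left (hV.subset_support i hx)
  have hfix_f : ∀ j, ∀ x ∈ W j, f x = x := fun j x hx =>
    (hfg x).resolve_right (hW.subset_support j hx)
  refine ⟨ι ⊕ ι', Sum.elim V W, ⟨?_, ?_, ?_⟩, Cardinal.add_def ι ι' ▸ rfl, ?_⟩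
  · rintro (i | j) x hx
    · simpa [hfix_g i x hx] using hV.1 i x hx
    · simpa [hfix_f j _ (hW.1 j x hx)] using hW.1 j x hx
  · rintro (i | j) (i' | j') hne
    · exact hV.2.1 fun h => hne (congrArg Sum.inl h)
    · exact hsupp.mono (hV.subset_support i) (hW.subset_support j')
    · exact hsupp.symm.mono (hW.subset_support j) (hV.subset_support i')
    · exact hW.2.1 fun h => hne (congrArg Sum.inr h)
  · ext x
    simp only [Set.mem_union, Set.iUnion_sum, Sum.elim_inl, Sum.elim_inr, hV.2.2, hW.2.2,
      Set.mem_ofPred_eq, ne_eq, hfg.mul_apply_eq_iff, not_and_or]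
  · rintro (i | j)
    exacts [hβ i, hβ' j]

theorem exists_mem_Sset_support_eq (C : Set Ω) (κ : Cardinal.{u}) {d : ℕ} (hd : 2 ≤ d)
    (hC : #C = κ * d) : ∃ g ∈ Sset Ω κ d, {x | g x ≠ x} = C := by
  classical
  obtain ⟨ψ⟩ : Nonempty (κ.out × Fin d ≃ C) := Cardinal.eq.1 <| by simp [hC]
  set g : Perm Ω := Perm.extendDomain ((Equiv.refl κ.out).prodCongr (finRotate d)) ψ
  have hg : ∀ a, g (ψ a) = ψ (a.1, finRotate d a.2) := fun a =>
    Perm.extendDomain_apply_image _ _ a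
  have hsupp : {x | g x ≠ x} = C := by
    ext x
    by_cases hx : x ∈ C
    · obtain ⟨a, rfl⟩ : ∃ a, (ψ a : Ω) = x := ⟨ψ.symm ⟨x, hx⟩, by simp⟩
      simp only [Set.mem_ofPred_eq, hg, ne_eq, Subtype.coe_inj, ψ.injective.eq_iff, hx, iff_true]
      have : finRotate d a.2 ≠ a.2 := Perm.mem_support.1 (by simp [support_finRotate_of_le hd])
      exact fun h => this (congrArg Prod.snd h)
    · simp [hx, g, Perm.extendDomain_apply_not_subtype _ _ hx]
  refine ⟨g, ⟨κ.out, fun i => Set.range fun k => (ψ (i, k) : Ω), ⟨?_, ?_, ?_⟩, κ.mk_out, ?_⟩,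
    hsupp⟩
  · rintro i _ ⟨k, rfl⟩
    exact ⟨finRotate d k, (hg (i, k)).symm⟩
  · intro i i' hne
    refine Set.disjoint_left.2 ?_
    rintro _ ⟨k, rfl⟩ ⟨k', hk'⟩
    exact hne (congrArg Prod.fst (ψ.injective (Subtype.ext hk'))).symm
  · rw [hsupp]
    ext x
    simp only [Set.mem_iUnion, Set.mem_range]
    constructor
    · rintro ⟨i, k, rfl⟩
      exact (ψ (i, k)).2
    · intro hx
      exact ⟨(ψ.symm ⟨x, hx⟩).1, (ψ.symm ⟨x, hx⟩).2, by simp⟩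
  · intro i
    have := Cardinal.mk_range_eq_of_injective (f := fun k => (ψ (i, k) : Ω)) fun k k' h => by
      simpa using ψ.injective (Subtype.ext h)
    simpa using this

namespace Equiv.Perm

theorem minimalPeriod_apply (φ : Perm Ω) (x : Ω) :
    minimalPeriod φ (φ x) = minimalPeriod φ x := by
  rw [minimalPeriod_eq_minimalPeriod_iff]
  intro k
  rw [IsPeriodicPt, IsFixedPt, iterate_eq_pow, ← mul_apply, ← pow_succ, pow_succ', mul_apply,
    φ.injective.eq_iff]
  rfl

theorem minimalPeriod_ofSubtype_subtypePerm {p : Ω → Prop} [DecidablePred p] {φ : Perm Ω}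
    (hp : ∀ x, p (φ x) ↔ p x) {x : Ω} (hx : p x) :
    minimalPeriod (ofSubtype (φ.subtypePerm hp)) x = minimalPeriod φ x := by
  rw [minimalPeriod_eq_minimalPeriod_iff]
  intro k
  simp only [IsPeriodicPt, IsFixedPt, iterate_eq_pow, ← map_pow, subtypePerm_pow,
    ofSubtype_subtypePerm_of_mem _ hx]

theorem ofSubtype_subtypePerm_not_mul_ofSubtype_subtypePerm {p : Ω → Prop} [DecidablePred p]
    {φ : Perm Ω} (hp : ∀ x, p (φ x) ↔ p x) :
    ofSubtype (φ.subtypePerm (p := fun x => ¬p x) fun x => (hp x).not) *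
      ofSubtype (φ.subtypePerm hp) = φ := by
  ext x
  by_cases hx : p x
  · rw [mul_apply, ofSubtype_subtypePerm_of_mem _ hx,
      ofSubtype_subtypePerm_of_not_mem (p := fun x => ¬p x) _ (not_not.2 ((hp x).2 hx))]
  · rw [mul_apply, ofSubtype_subtypePerm_of_not_mem _ hx,
      ofSubtype_subtypePerm_of_mem (p := fun x => ¬p x) _ hx]

end Equiv.Perm

theorem mem_closure_Sset_of_minimalPeriod_eq [Infinite Ω] {n d : ℕ} (hn : n ≠ 0)
    (hdn : d ∣ n) {h : Perm Ω} (hper : ∀ x, h x ≠ x → minimalPeriod h x = d) :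
    h ∈ closure (Sset Ω #Ω n) := by
  obtain rfl | ⟨x, hx⟩ : h = 1 ∨ ∃ x, h x ≠ x := by
    by_contra! H
    exact H.1 (Perm.ext H.2)
  · exact one_mem _
  have hd0 : d ≠ 0 := by rintro rfl; exact hn (zero_dvd_iff.1 hdn)
  have hd : 2 ≤ d := by
    have : d ≠ 1 := fun h1 => hx (minimalPeriod_eq_one_iff_isFixedPt.1 (hper x hx ▸ h1))
    omega
  have hΩ := Cardinal.aleph0_le_mk Ω
  have hdΩ : (d : Cardinal) < #Ω := Cardinal.natCast_lt_aleph0.trans_le hΩ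
  have coarsen : ∀ f ∈ Sset Ω #Ω d, f ∈ closure (Sset Ω #Ω n) := fun f hf => by
    refine subset_closure ?_
    have := mem_Sset_natCast_mul hf hΩ (Nat.div_ne_zero_iff_of_dvd hdn |>.2 ⟨hn, hd0⟩)
    rwa [← Nat.cast_mul, Nat.div_mul_cancel hdn] at this
  obtain ⟨κ, hκ⟩ := exists_mem_Sset_of_minimalPeriod_eq hd0 hper
  rcases eq_or_ne κ #Ω with rfl | hne
  · exact coarsen h hκ
  have hκlt : κ < #Ω := (Cardinal.le_mul_right (by exact_mod_cast hd0)).trans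
    ((mk_support_of_mem_Sset hκ).symm.trans_le (Cardinal.mk_set_le _)) |>.lt_of_ne hne
  have hsupp : #{x | h x ≠ x} < #Ω :=
    mk_support_of_mem_Sset hκ ▸ Cardinal.mul_lt_of_lt hΩ hκlt hdΩ
  obtain ⟨g, hg, hgsupp⟩ := exists_mem_Sset_support_eq {x | h x ≠ x}ᶜ #Ω hd <| by
    rw [Cardinal.mk_compl_of_infinite _ hsupp,
      Cardinal.mul_eq_left hΩ hdΩ.le (by exact_mod_cast hd0)]
  have hdisj : h.Disjoint g := fun x => by
    by_contra! H
    exact (hgsupp ▸ H.2 : x ∈ {x | h x ≠ x}ᶜ) H.1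
  have hhg := mul_mem_Sset_add hκ hg hdisj
  rw [Cardinal.add_eq_right hΩ hκlt.le] at hhg
  simpa using mul_mem (coarsen _ hhg) (inv_mem (coarsen g hg))

theorem mem_closure_Sset_of_minimalPeriod_mem [Infinite Ω] {n : ℕ} (D : Finset ℕ)
    (hD : D ⊆ n.divisors) {φ : Perm Ω} (hφ : ∀ x, φ x ≠ x → minimalPeriod φ x ∈ D) :
    φ ∈ closure (Sset Ω #Ω n) := by
  classical
  induction D using Finset.induction_on generalizing φ with
  | empty =>
    obtain rfl : φ = 1 := Perm.ext fun x => by_contra fun hx => Finset.notMem_empty _ (hφ x hx)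
    exact one_mem _
  | insert d D _ ih =>
    obtain ⟨hdn, hn⟩ := Nat.mem_divisors.1 (hD (Finset.mem_insert_self d D))
    let p : Ω → Prop := fun x => minimalPeriod φ x = d
    have hp : ∀ x, p (φ x) ↔ p x := fun x => by simp only [p, Perm.minimalPeriod_apply]
    rw [← Perm.ofSubtype_subtypePerm_not_mul_ofSubtype_subtypePerm hp]
    refine mul_mem (ih ((Finset.subset_insert d D).trans hD) fun x hx => ?_)
      (mem_closure_Sset_of_minimalPeriod_eq hn hdn fun x hx => ?_)
    · have hpx : ¬p x := fun hpx => hx (Perm.ofSubtype_subtypePerm_of_not_mem _ (not_not.2 hpx))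
      rw [Perm.minimalPeriod_ofSubtype_subtypePerm (p := fun x => ¬p x) _ hpx]
      refine (Finset.mem_insert.1 (hφ x fun hfix => hx ?_)).resolve_left hpx
      rw [Perm.ofSubtype_subtypePerm_of_mem (p := fun x => ¬p x) _ hpx, hfix]
    · have hpx : p x := by_contra fun hpx => hx (Perm.ofSubtype_subtypePerm_of_not_mem _ hpx)
      rw [Perm.minimalPeriod_ofSubtype_subtypePerm _ hpx]
      exact hpx

theorem mem_closure_Sset_of_pow_eq_one [Infinite Ω] {n : ℕ} (hn : n ≠ 0) {φ : Perm Ω}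
    (hφ : φ ^ n = 1) : φ ∈ closure (Sset Ω #Ω n) :=
  mem_closure_Sset_of_minimalPeriod_mem n.divisors subset_rfl fun x _ =>
    Nat.mem_divisors.2
      ⟨(pow_smul_eq_iff_minimalPeriod_dvd (a := φ) (b := x)).1 (by rw [hφ]; rfl), hn⟩

end

theorem orderN_le_closure_Sset {Ω : Type u} [Infinite Ω] (n : ℕ) (hn : 2 ≤ n) :
    Subgroup.closure {f : Equiv.Perm Ω | orderOf f = n} ≤
      Subgroup.closure (Sset Ω (#Ω) n) :=
  (Subgroup.closure_le _).2 fun f hf =>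
    mem_closure_Sset_of_pow_eq_one (by omega) (hf ▸ pow_orderOf_eq_one f)
end

section
/- For an infinite set Ω and any infinite cardinal α ≤ |Ω|, S_{|Ω|,2}(Ω) ⊆ S_{|Ω|,α}(Ω). -/
open Cardinal

universe u

theorem Sset_two_subset {Ω : Type u} [Infinite Ω] (α : Cardinal.{u})
    (hα : ℵ₀ ≤ α) (hα' : α ≤ #Ω) : Sset Ω (#Ω) 2 ⊆ Sset Ω (#Ω) α := by
  rintro f ⟨ι, V, ⟨hinv, hdisj, hsupp⟩, hι, hV⟩
  have hΩ : (ℵ₀ : Cardinal.{u}) ≤ #Ω := Cardinal.infinite_iff.mp ‹Infinite Ω›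
  have hα0 : α ≠ 0 := (Cardinal.aleph0_pos.trans_le hα).ne'
  have hcard : #ι = #(Ω × α.out) := by
    rw [Cardinal.mk_prod, Cardinal.lift_id, Cardinal.lift_id, Cardinal.mk_out,
      Cardinal.mul_eq_left hΩ hα' hα0, hι]
  obtain ⟨e⟩ := Cardinal.eq.mp hcard
  refine ⟨Ω, fun s => ⋃ t : α.out, V (e.symm (s, t)), ⟨?_, ?_, ?_⟩, rfl, ?_⟩
  · intro s x hx
    simp only [Set.mem_iUnion] at hx ⊢
    obtain ⟨t, ht⟩ := hx
    exact ⟨t, hinv _ x ht⟩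
  · intro s s' hss
    simp only [Function.onFun]
    refine Set.disjoint_iUnion_left.mpr fun t => Set.disjoint_iUnion_right.mpr fun t' => ?_
    exact hdisj (fun h => hss (by simpa using congrArg (Prod.fst ∘ e) h))
  · rw [← hsupp]
    ext x
    simp only [Set.mem_iUnion]
    constructor
    · rintro ⟨s, t, h⟩; exact ⟨_, h⟩
    · rintro ⟨i, h⟩
      exact ⟨(e i).1, (e i).2, by simpa using h⟩
  · intro s
    have hd : Pairwise (Function.onFun Disjoint fun t : α.out => V (e.symm (s, t))) := by
      intro t t' htt
      exact hdisj fun h => htt (by simpa using congrArg (Prod.snd ∘ e) h)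
    rw [Cardinal.mk_iUnion_eq_sum_mk hd]
    have : (Cardinal.sum fun t : α.out => #(V (e.symm (s, t)))) =
        Cardinal.sum fun _ : α.out => (2 : Cardinal.{u}) := by
      congr 1; funext t; exact hV _
    rw [this, Cardinal.sum_const', Cardinal.mk_out,
      Cardinal.mul_eq_left hα (by exact_mod_cast Cardinal.nat_lt_aleph0 2 |>.le.trans hα)
        (by norm_num)]
end

section
/- For a countably infinite set Ω, every permutation of Ω with only finitely many orbits lies in the subgroup generated by the set LF of locally finite permutations (those all of whose orbits are finite). In particular, any permutation consisting of a single infinite cycle is a product of two locally finite permutations. -/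
/-- The orbit (cycle) of `x` under the permutation `f`. -/
def orbitOf {Ω : Type*} (f : Equiv.Perm Ω) (x : Ω) : Set Ω :=
  Set.range fun k : ℤ => (f ^ k) x

/-- Locally finite permutations: all orbits are finite. -/
def LFset (Ω : Type*) : Set (Equiv.Perm Ω) := {f | ∀ x, (orbitOf f x).Finite}

/-- Ringed permutations: only finitely many orbits. -/
def RingedSet (Ω : Type*) : Set (Equiv.Perm Ω) := {f | (Set.range (orbitOf f)).Finite}

/-- Wild permutations: infinitely many infinite orbits. -/
def WildSet (Ω : Type*) : Set (Equiv.Perm Ω) :=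
  {f | {O : Set Ω | (∃ x, O = orbitOf f x) ∧ O.Infinite}.Infinite}

namespace AuxRefl

variable {Ω : Type*} (f : Equiv.Perm Ω)

lemma comp_pow (j k : ℤ) (x : Ω) : (f ^ j) ((f ^ k) x) = (f ^ (j + k)) x := by
  rw [zpow_add, Equiv.Perm.mul_apply]

/-- The orbit setoid of `f`. -/
def oset : Setoid Ω :=
  ⟨fun x y => ∃ k : ℤ, (f ^ k) x = y, by
    refine ⟨fun x => ⟨0, rfl⟩, ?_, ?_⟩
    · rintro x y ⟨k, rfl⟩
      exact ⟨-k, by rw [comp_pow, neg_add_cancel, zpow_zero, Equiv.Perm.one_apply]⟩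
    · rintro x y z ⟨k, rfl⟩ ⟨j, rfl⟩
      exact ⟨j + k, (comp_pow f j k x).symm⟩⟩

/-- A choice of basepoint in each orbit. -/
noncomputable def bp (y : Ω) : Ω := (Quotient.mk (oset f) y).out

lemma bp_eq_of_rel {x y : Ω} (h : ∃ k : ℤ, (f ^ k) x = y) : bp f x = bp f y := by
  unfold bp
  rw [Quotient.sound (s := oset f) h]

lemma bp_bp (y : Ω) : bp f (bp f y) = bp f y := by
  unfold bp
  rw [Quotient.out_eq]

lemma exists_exp (y : Ω) : ∃ k : ℤ, (f ^ k) (bp f y) = y :=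
  Quotient.exact (s := oset f) (Quotient.out_eq _)

/-- An exponent `k` with `f^k (bp y) = y`. -/
noncomputable def expo (y : Ω) : ℤ := (exists_exp f y).choose

lemma expo_spec (y : Ω) : (f ^ expo f y) (bp f y) = y := (exists_exp f y).choose_spec

/-- The reflection: `f^k (bp y) ↦ f^(-k) (bp y)`. -/
noncomputable def refl (y : Ω) : Ω := (f ^ (-(expo f y))) (bp f y)

lemma bp_refl (y : Ω) : bp f (refl f y) = bp f y := by
  have h1 : bp f (refl f y) = bp f (bp f y) :=
    (bp_eq_of_rel f (x := bp f y) ⟨-(expo f y), rfl⟩).symm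
  rw [h1]
  exact bp_eq_of_rel f ⟨expo f y, expo_spec f y⟩

lemma stab_neg {c : Ω} {m : ℤ} (h : (f ^ m) c = c) : (f ^ (-m)) c = c := by
  have := congrArg (f ^ (-m)) h
  rw [comp_pow, neg_add_cancel, zpow_zero, Equiv.Perm.one_apply] at this
  exact this.symm

/-- Key computation: if `f^j (bp y) = f^t (bp y)` then `f^(-j) (bp y) = f^(-t) (bp y)`. -/
lemma neg_eq_of_eq {c : Ω} {j t : ℤ} (h : (f ^ j) c = (f ^ t) c) :
    (f ^ (-j)) c = (f ^ (-t)) c := by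
  have h1 : (f ^ (j - t)) c = c := by
    have := congrArg (f ^ (-t)) h
    rwa [comp_pow, comp_pow, neg_add_cancel, zpow_zero, Equiv.Perm.one_apply,
      neg_add_eq_sub] at this
  have h2 : (f ^ (-(j - t))) c = c := stab_neg f h1
  have := congrArg (f ^ (-j)) h1
  rw [comp_pow] at this
  calc (f ^ (-j)) c = (f ^ (-j + (j - t))) c := this.symm
    _ = (f ^ (-t)) c := by rw [show -j + (j - t) = -t by ring]

lemma refl_eq_of_exp {y : Ω} {k : ℤ} (h : (f ^ k) (bp f y) = y) :
    refl f y = (f ^ (-k)) (bp f y) := by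
  unfold refl
  exact neg_eq_of_eq f ((expo_spec f y).trans h.symm)

lemma refl_invol : Function.Involutive (refl f) := by
  intro y
  have hb : bp f (refl f y) = bp f y := bp_refl f y
  have h1 : (f ^ (-(expo f y))) (bp f (refl f y)) = refl f y := by rw [hb]; rfl
  have := refl_eq_of_exp f h1
  rw [this, hb, neg_neg, expo_spec]

lemma frefl_invol : Function.Involutive (fun y => f (refl f y)) := by
  intro y
  dsimp only
  set k := expo f y with hk
  have h1 : f (refl f y) = (f ^ (1 - k)) (bp f y) := by
    unfold refl
    rw [← hk]
    have : f ((f ^ (-k)) (bp f y)) = (f ^ (1 + -k)) (bp f y) := by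
      rw [← comp_pow, zpow_one]
    rw [this, ← sub_eq_add_neg]
  have hb : bp f (f (refl f y)) = bp f y := by
    rw [h1]; exact ((bp_eq_of_rel f (x := bp f y) ⟨1 - k, rfl⟩).symm).trans (bp_bp f y)
  have h2 : (f ^ (1 - k)) (bp f (f (refl f y))) = f (refl f y) := by rw [hb, h1]
  have h3 : refl f (f (refl f y)) = (f ^ (-(1 - k))) (bp f (f (refl f y))) :=
    refl_eq_of_exp f h2
  rw [h3, hb]
  have : f ((f ^ (-(1 - k))) (bp f y)) = (f ^ (1 + -(1 - k))) (bp f y) := by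
    rw [← comp_pow, zpow_one]
  rw [this]
  have : (1 : ℤ) + -(1 - k) = k := by ring
  rw [this]
  exact expo_spec f y

/-- The reflection as a permutation. -/
noncomputable def rPerm : Equiv.Perm Ω := (refl_invol f).toPerm

lemma rPerm_sq : rPerm f * rPerm f = 1 := by
  ext y
  exact refl_invol f y

lemma f_mul_rPerm_sq : (f * rPerm f) * (f * rPerm f) = 1 := by
  ext y
  exact frefl_invol f y

/-- Involutions are locally finite. -/
lemma invol_mem_LF {σ : Equiv.Perm Ω} (h : σ * σ = 1) : σ ∈ LFset Ω := by
  intro x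
  refine Set.Finite.subset ((Set.finite_singleton (σ x)).insert x) ?_
  rintro y ⟨k, rfl⟩
  have hsq : σ ^ (2 : ℤ) = 1 := by
    rw [show (2:ℤ) = 1 + 1 by norm_num, zpow_add, zpow_one, h]
  have hk : σ ^ k = σ ^ (k % 2) := by
    conv_lhs => rw [← Int.mul_ediv_add_emod k 2]
    rw [zpow_add, zpow_mul, hsq, one_zpow, one_mul]
  have hr : k % 2 = 0 ∨ k % 2 = 1 := Int.emod_two_eq_zero_or_one k
  rcases hr with hr | hr
  · simp [hk, hr]
  · simp [hk, hr]

lemma prod_two_invol : ∃ g h : Equiv.Perm Ω,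
    g * g = 1 ∧ h * h = 1 ∧ f = g * h := by
  refine ⟨f * rPerm f, rPerm f, f_mul_rPerm_sq f, rPerm_sq f, ?_⟩
  rw [mul_assoc, rPerm_sq, mul_one]

end AuxRefl

theorem ringed_in_closure_LF {Ω : Type*} [Countable Ω] [Infinite Ω] :
    (∀ f : Equiv.Perm Ω, f ∈ RingedSet Ω → f ∈ Subgroup.closure (LFset Ω)) ∧
    (∀ f : Equiv.Perm Ω, (∀ x, orbitOf f x = Set.univ) →
      ∃ g h : Equiv.Perm Ω, g ∈ LFset Ω ∧ h ∈ LFset Ω ∧ f = g * h) := by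
  constructor
  · intro f _
    obtain ⟨g, h, hg, hh, hf⟩ := AuxRefl.prod_two_invol f
    rw [hf]
    exact mul_mem (Subgroup.subset_closure (AuxRefl.invol_mem_LF hg))
      (Subgroup.subset_closure (AuxRefl.invol_mem_LF hh))
  · intro f _
    obtain ⟨g, h, hg, hh, hf⟩ := AuxRefl.prod_two_invol f
    exact ⟨g, h, AuxRefl.invol_mem_LF hg, AuxRefl.invol_mem_LF hh, hf⟩
end

section
/- For a countably infinite set Ω, every involution of Ω (element of order 2) lies in the subgroup generated by the set R of permutations with only finitely many orbits. In particular, a product of infinitely many disjoint transpositions can be written as a product of two permutations each consisting of a single infinite cycle. -/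
/-!
An involution of a countable set is determined up to conjugacy by its fixed-point set and the
number of its 2-cycles. Hence a fixed-point-free involution is conjugate to the involution of
`ℤ` swapping `4k + r` and `4k + r + 2` (`r = 0, 1`), which is the shift `i ↦ i + 1` times a
single infinite cycle `zigzag` with `zigzag ^ 4 = (· - 4)`; and an involution with one fixed
point is conjugate to `i ↦ -i`, the shift times the fixed-point-free `i ↦ -i - 1`. Pairing up
the 2-cycles and the fixed points of an involution with infinitely many 2-cycles writes it as a
product of two involutions with at most one fixed point each. An involution with finitely many
2-cycles is finitary, and a finitary `σ` lies in the closure because `σ * c` differs from a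
single cycle `c` in finitely many points, which changes only finitely many orbits.
-/

open Equiv Function Set Subgroup

namespace Equiv.Perm

variable {α β : Type*}

theorem orbitOf_eq_of_sameCycle {σ : Perm α} {x y : α} (h : σ.SameCycle x y) :
    orbitOf σ y = orbitOf σ x :=
  Set.ext fun _ => ⟨h.trans, h.symm.trans⟩

theorem orbitOf_permCongr (e : α ≃ β) (σ : Perm α) (x : α) :
    orbitOf (e.permCongr σ) (e x) = e '' orbitOf σ x := by
  have hpow : ∀ k : ℤ, (e.permCongr σ ^ k) (e x) = e ((σ ^ k) x) := fun k => by
    rw [← e.permCongrHom_coe, ← map_zpow]; simp [Equiv.permCongr_apply]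
  simp only [orbitOf, hpow]
  exact Set.range_comp e _

theorem permCongr_mem_ringedSet (e : α ≃ β) {σ : Perm α} (h : σ ∈ RingedSet α) :
    e.permCongr σ ∈ RingedSet β := by
  refine (h.image (e '' ·)).subset ?_
  rintro _ ⟨y, rfl⟩
  exact ⟨_, ⟨e.symm y, rfl⟩, by simp only [← orbitOf_permCongr, e.apply_symm_apply]⟩

theorem permCongr_mem_closure_ringedSet (e : α ≃ β) {σ : Perm α}
    (h : σ ∈ closure (RingedSet α)) : e.permCongr σ ∈ closure (RingedSet β) := by
  have hmap := (closure (RingedSet α)).mem_map_of_mem (e.permCongrHom : Perm α →* Perm β) h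
  rw [MonoidHom.map_closure] at hmap
  refine closure_mono ?_ hmap
  rintro _ ⟨τ, hτ, rfl⟩
  exact permCongr_mem_ringedSet e hτ

def IsSingleCycle (σ : Perm α) : Prop := ∀ x, orbitOf σ x = univ

theorem IsSingleCycle.permCongr {σ : Perm α} (h : σ.IsSingleCycle) (e : α ≃ β) :
    (e.permCongr σ).IsSingleCycle := by
  intro y
  rw [← e.apply_symm_apply y, orbitOf_permCongr, h, image_univ, e.range_eq_univ]

theorem IsSingleCycle.mem_ringedSet {σ : Perm α} (h : σ.IsSingleCycle) : σ ∈ RingedSet α :=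
  (finite_singleton univ).subset (range_subset_iff.2 h)

theorem isSingleCycle_of_forall_sameCycle {σ : Perm α} (h : ∀ x y, σ.SameCycle x y) :
    σ.IsSingleCycle :=
  fun x => eq_univ_of_forall (h x)

theorem isSingleCycle_addRight_one : (Equiv.addRight (1 : ℤ)).IsSingleCycle :=
  isSingleCycle_of_forall_sameCycle fun _ _ =>
    Int.addRight_one_isCycle.sameCycle (by simp) (by simp)

theorem zpow_apply_eq_of_forall_zpow_apply {τ τ₀ : Perm α} {x : α}
    (h : ∀ k : ℤ, τ ((τ ^ k) x) = τ₀ ((τ ^ k) x)) (k : ℤ) :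
    (τ ^ k) x = (τ₀ ^ k) x := by
  have step : ∀ (π : Perm α) (m : ℤ), (π ^ (m + 1)) x = π ((π ^ m) x) := fun π m => by
    rw [add_comm, zpow_one_add, mul_apply]
  induction k using Int.induction_on with
  | zero => simp
  | succ k ih => rw [step, step, h, ih]
  | pred k ih => exact τ₀.injective (by rw [← h, ← step, ← step, sub_add_cancel, ih])

theorem mem_ringedSet_of_finite_ne {τ τ₀ : Perm α} (hD : {x | τ x ≠ τ₀ x}.Finite)
    (h₀ : τ₀ ∈ RingedSet α) : τ ∈ RingedSet α := by
  refine ((hD.image (orbitOf τ)).union h₀).subset ?_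
  rintro _ ⟨x, rfl⟩
  by_cases hx : ∃ k : ℤ, (τ ^ k) x ∈ {x | τ x ≠ τ₀ x}
  · obtain ⟨k, hk⟩ := hx
    exact Or.inl ⟨_, hk, orbitOf_eq_of_sameCycle ⟨k, rfl⟩⟩
  · push Not at hx
    refine Or.inr ⟨x, congrArg range (funext fun k => ?_)⟩
    exact (zpow_apply_eq_of_forall_zpow_apply (fun k => not_not.1 (hx k)) k).symm

theorem mem_closure_ringedSet_of_finite_support [Countable α] [Infinite α] {σ : Perm α}
    (hσ : (fixedPoints σ)ᶜ.Finite) : σ ∈ closure (RingedSet α) := by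
  obtain ⟨e⟩ := nonempty_equiv_of_countable (α := ℤ) (β := α)
  set c := e.permCongr (Equiv.addRight 1)
  have hc : c ∈ RingedSet α := (isSingleCycle_addRight_one.permCongr e).mem_ringedSet
  have hσc : σ * c ∈ RingedSet α :=
    mem_ringedSet_of_finite_ne ((hσ.preimage c.injective.injOn).subset fun _ hx => hx) hc
  simpa using mul_mem (subset_closure hσc) (inv_mem (subset_closure hc))

def standardInvolution (F S : Type*) : Perm (F ⊕ S × Bool) :=
  (Equiv.refl F).sumCongr ((Equiv.refl S).prodCongr Equiv.boolNot)

theorem eq_permCongr_of_forall_apply {f : Perm α} {g : Perm β} (φ : β ≃ α)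
    (h : ∀ y, f (φ y) = φ (g y)) : f = φ.permCongr g :=
  Equiv.ext fun x => by simpa [Equiv.permCongr_apply] using h (φ.symm x)

theorem exists_transversal_of_involutive [Countable α] {f : Perm α} (hf : Involutive f) :
    ∃ T : Set α, (∀ x ∈ T, f x ∉ T) ∧ ∀ x, f x ≠ x → x ∉ T → f x ∈ T := by
  obtain ⟨enc, henc⟩ := exists_injective_nat α
  refine ⟨{x | enc x < enc (f x)}, fun x hx hfx => ?_, fun x hfx hx => ?_⟩
  · simp only [mem_ofPred_eq, hf x] at hx hfx
    omega
  · have : enc (f x) ≠ enc x := henc.ne hfx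
    simp only [mem_ofPred_eq, hf x] at hx ⊢
    omega

theorem exists_equiv_of_transversal {f : Perm α} (hf : Involutive f) {T : Set α}
    (hT : ∀ x ∈ T, f x ∉ T) (hT' : ∀ x, f x ≠ x → x ∉ T → f x ∈ T) :
    ∃ φ : fixedPoints f ⊕ T × Bool ≃ α, f = φ.permCongr (standardInvolution _ T) := by
  have hTfix : ∀ x ∈ T, f x ≠ x := fun x hx hfx => hT x hx (by rwa [hfx])
  let φ : fixedPoints f ⊕ T × Bool → α :=
    Sum.elim Subtype.val fun p => if p.2 then f p.1 else p.1
  have hmoved : ∀ (t : T) (b : Bool), f (φ (.inr (t, b))) ≠ φ (.inr (t, b)) := by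
    rintro t (_ | _) h
    · exact hTfix t t.2 h
    · exact hTfix t t.2 ((hf t).symm.trans h).symm
  have hinj : Injective φ := by
    rintro (p | ⟨t, b⟩) (q | ⟨s, c⟩) h
    · exact congrArg _ (Subtype.ext h)
    · exact (hmoved s c (h ▸ p.2)).elim
    · exact (hmoved t b (by rw [h]; exact q.2)).elim
    · rcases b with _ | _ <;> rcases c with _ | _
      · have h' : (t : α) = s := h
        rw [Subtype.ext h']
      · have h' : (t : α) = f s := h
        exact (hT s s.2 (h' ▸ t.2)).elim
      · have h' : f t = s := h
        exact (hT t t.2 (h' ▸ s.2)).elim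
      · have h' : f t = f s := h
        rw [Subtype.ext (f.injective h')]
  have hsurj : Surjective φ := by
    intro x
    by_cases hx : f x = x
    · exact ⟨.inl ⟨x, hx⟩, rfl⟩
    by_cases hxT : x ∈ T
    · exact ⟨.inr (⟨x, hxT⟩, false), rfl⟩
    · exact ⟨.inr (⟨f x, hT' x hx hxT⟩, true), hf x⟩
  refine ⟨.ofBijective φ ⟨hinj, hsurj⟩, eq_permCongr_of_forall_apply _ ?_⟩
  rintro (p | ⟨t, _ | _⟩)
  · exact p.2
  · rfl
  · exact hf t

theorem exists_equiv_standardInvolution [Countable α] (S : Type*) [Countable S] [Infinite S]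
    {f : Perm α} (hf : Involutive f) (hM : (fixedPoints f)ᶜ.Infinite) :
    ∃ φ : fixedPoints f ⊕ S × Bool ≃ α, f = φ.permCongr (standardInvolution _ S) := by
  obtain ⟨T, hT, hT'⟩ := exists_transversal_of_involutive hf
  obtain ⟨φ, hφ⟩ := exists_equiv_of_transversal hf hT hT'
  have hTinf : T.Infinite := by
    refine fun hfin => hM ((hfin.union (hfin.image f)).subset fun x hx => ?_)
    by_cases hxT : x ∈ T
    · exact .inl hxT
    · exact .inr ⟨f x, hT' x hx hxT, hf x⟩
  have := hTinf.to_subtype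
  obtain ⟨e⟩ := nonempty_equiv_of_countable (α := S) (β := T)
  refine ⟨((Equiv.refl _).sumCongr (e.prodCongr (Equiv.refl _))).trans φ,
    eq_permCongr_of_forall_apply _ ?_⟩
  rintro (p | ⟨s, b⟩) <;> simp [hφ, standardInvolution, Equiv.permCongr_apply]

theorem exists_permCongr_eq_of_involutive [Countable α] [Countable β] {f : Perm α}
    {g : Perm β} (hf : Involutive f) (hg : Involutive g) (hMf : (fixedPoints f)ᶜ.Infinite)
    (hMg : (fixedPoints g)ᶜ.Infinite) (e : fixedPoints g ≃ fixedPoints f) :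
    ∃ ψ : β ≃ α, f = ψ.permCongr g := by
  obtain ⟨φf, hφf⟩ := exists_equiv_standardInvolution ℕ hf hMf
  obtain ⟨φg, hφg⟩ := exists_equiv_standardInvolution ℕ hg hMg
  refine ⟨φg.symm.trans ((e.sumCongr (Equiv.refl _)).trans φf),
    eq_permCongr_of_forall_apply _ fun y => ?_⟩
  obtain ⟨z, rfl⟩ := φg.surjective y
  rcases z with p | ⟨n, b⟩ <;> simp [hφf, hφg, standardInvolution, Equiv.permCongr_apply]

end Equiv.Perm

namespace Int

open Equiv.Perm

def pairByTwo : Perm ℤ :=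
  Involutive.toPerm (fun i => if i % 4 < 2 then i + 2 else i - 2) fun i => by
    dsimp only
    split_ifs <;> omega

theorem pairByTwo_apply (i : ℤ) : pairByTwo i = if i % 4 < 2 then i + 2 else i - 2 := rfl

theorem pairByTwo_involutive : Involutive pairByTwo := fun i => by
  simp only [pairByTwo_apply]
  split_ifs <;> omega

theorem pairByTwo_apply_ne (i : ℤ) : pairByTwo i ≠ i := by
  rw [pairByTwo_apply]
  split_ifs <;> omega

def zigzag : Perm ℤ := (Equiv.addRight 1)⁻¹ * pairByTwo

theorem addRight_one_mul_zigzag : Equiv.addRight 1 * zigzag = pairByTwo :=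
  mul_inv_cancel_left _ _

theorem zigzag_apply (i : ℤ) : zigzag i = if i % 4 < 2 then i + 1 else i - 3 := by
  simp only [zigzag, mul_apply, pairByTwo_apply, Perm.inv_def, Equiv.addRight_symm,
    Equiv.coe_addRight]
  split_ifs <;> omega

theorem zigzag_pow_four : zigzag ^ 4 = Equiv.addRight (-4) := by
  ext i
  simp only [pow_succ, pow_zero, one_mul, mul_apply, zigzag_apply, Equiv.coe_addRight]
  split_ifs <;> omega

theorem sameCycle_zigzag_add_four_mul (x k : ℤ) : zigzag.SameCycle x (x + 4 * k) :=
  ⟨4 * -k, by simp [zpow_mul, zigzag_pow_four]; ring⟩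

theorem isSingleCycle_zigzag : zigzag.IsSingleCycle := by
  have h0 : ∀ y, zigzag.SameCycle 0 y := by
    intro y
    have hr : zigzag.SameCycle 0 (y % 4) := by
      obtain h | h | h | h : y % 4 = 0 ∨ y % 4 = 1 ∨ y % 4 = 2 ∨ y % 4 = 3 := by omega
      · rw [h]
      · exact h ▸ ⟨1, by simp [zigzag_apply]⟩
      · exact h ▸ ⟨2, by simp [zpow_ofNat, pow_succ, zigzag_apply]⟩
      · have h3 : zigzag.SameCycle 0 (-1) := ⟨3, by simp [zpow_ofNat, pow_succ, zigzag_apply]⟩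
        exact h ▸ h3.trans (sameCycle_zigzag_add_four_mul (-1) 1)
    simpa only [Int.emod_add_mul_ediv] using
      hr.trans (sameCycle_zigzag_add_four_mul (y % 4) (y / 4))
  exact isSingleCycle_of_forall_sameCycle fun x y => (h0 x).symm.trans (h0 y)

def negSubOne : Perm ℤ := (Equiv.addRight 1)⁻¹ * Equiv.neg ℤ

theorem addRight_one_mul_negSubOne : Equiv.addRight 1 * negSubOne = Equiv.neg ℤ :=
  mul_inv_cancel_left _ _

theorem negSubOne_apply (i : ℤ) : negSubOne i = -i - 1 := by
  simp [negSubOne, Perm.inv_def, sub_eq_add_neg]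

theorem negSubOne_involutive : Involutive negSubOne := fun i => by
  simp only [negSubOne_apply]; ring

theorem negSubOne_apply_ne (i : ℤ) : negSubOne i ≠ i := by
  rw [negSubOne_apply]; omega

theorem fixedPoints_neg : fixedPoints (Equiv.neg ℤ) = {0} := by
  ext i
  simp only [mem_fixedPoints, IsFixedPt, Equiv.neg_apply, mem_singleton_iff]
  omega

end Int

namespace Equiv.Perm

variable {α β : Type*}

theorem exists_isSingleCycle_mul_eq_of_forall_apply_ne [Countable α] [Infinite α] {f : Perm α}
    (hf : Involutive f) (hfix : ∀ x, f x ≠ x) :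
    ∃ g h : Perm α, g.IsSingleCycle ∧ h.IsSingleCycle ∧ f = g * h := by
  have : IsEmpty (fixedPoints f) := ⟨fun x => hfix x x.2⟩
  have : IsEmpty (fixedPoints Int.pairByTwo) := ⟨fun i => Int.pairByTwo_apply_ne i i.2⟩
  obtain ⟨ψ, hψ⟩ := exists_permCongr_eq_of_involutive hf Int.pairByTwo_involutive
    (toFinite _).infinite_compl (toFinite _).infinite_compl (Equiv.equivOfIsEmpty _ _)
  refine ⟨_, _, isSingleCycle_addRight_one.permCongr ψ,
    Int.isSingleCycle_zigzag.permCongr ψ, ?_⟩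
  rw [hψ, ← Equiv.permCongr_mul, Int.addRight_one_mul_zigzag]

theorem mem_closure_ringedSet_of_forall_apply_ne [Countable α] [Infinite α] {f : Perm α}
    (hf : Involutive f) (hfix : ∀ x, f x ≠ x) : f ∈ closure (RingedSet α) := by
  obtain ⟨g, h, hg, hh, rfl⟩ := exists_isSingleCycle_mul_eq_of_forall_apply_ne hf hfix
  exact mul_mem (subset_closure hg.mem_ringedSet) (subset_closure hh.mem_ringedSet)

theorem mem_closure_ringedSet_of_subsingleton_fixedPoints [Countable α] [Infinite α]
    {f : Perm α} (hf : Involutive f) (hfix : (fixedPoints f).Subsingleton) :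
    f ∈ closure (RingedSet α) := by
  obtain hempty | ⟨a, ha⟩ := hfix.eq_empty_or_singleton
  · exact mem_closure_ringedSet_of_forall_apply_ne hf fun x hx => hempty.subset hx
  obtain ⟨ψ, hψ⟩ := exists_permCongr_eq_of_involutive hf (g := Equiv.neg ℤ) neg_neg
    hfix.finite.infinite_compl (Int.fixedPoints_neg ▸ (finite_singleton 0).infinite_compl)
    ((setCongr Int.fixedPoints_neg).trans ((Equiv.ofUnique _ _).trans (setCongr ha).symm))
  rw [hψ, ← Int.addRight_one_mul_negSubOne, Equiv.permCongr_mul]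
  exact mul_mem (subset_closure (isSingleCycle_addRight_one.permCongr ψ).mem_ringedSet)
    (permCongr_mem_closure_ringedSet ψ
      (mem_closure_ringedSet_of_forall_apply_ne Int.negSubOne_involutive Int.negSubOne_apply_ne))

theorem exists_involutive_subsingleton_fixedPoints (α : Type*) [Countable α] :
    ∃ v : Perm α, Involutive v ∧ (fixedPoints v).Subsingleton := by
  cases finite_or_infinite α
  · obtain ⟨n, ⟨e⟩⟩ := Finite.exists_equiv_fin α
    refine ⟨e.symm.permCongr Fin.revPerm, fun x => by simp [Equiv.permCongr_apply],
      fun x hx y hy => e.injective (Fin.ext ?_)⟩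
    have hx' : (e x).rev = e x := by
      simpa [IsFixedPt, Equiv.permCongr_apply, e.symm_apply_eq] using hx
    have hy' : (e y).rev = e y := by
      simpa [IsFixedPt, Equiv.permCongr_apply, e.symm_apply_eq] using hy
    have := (e x).isLt
    rw [Fin.ext_iff, Fin.val_rev] at hx' hy'
    omega
  · obtain ⟨e⟩ := nonempty_equiv_of_countable (α := α) (β := ℕ × Bool)
    refine ⟨e.symm.permCongr ((Equiv.refl ℕ).prodCongr boolNot),
      fun x => by simp [Equiv.permCongr_apply, Prod.map], fun x hx => ?_⟩
    simp [IsFixedPt, Equiv.permCongr_apply, e.symm_apply_eq, Prod.ext_iff] at hx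

theorem involutive_sumCongr {v : Perm α} {w : Perm β} (hv : Involutive v) (hw : Involutive w) :
    Involutive (v.sumCongr w) := by
  rintro (x | y) <;> simp [hv _, hw _]

theorem subsingleton_fixedPoints_sumCongr {v : Perm α} {w : Perm β}
    (hv : (fixedPoints v).Subsingleton) (hw : ∀ y, w y ≠ y) :
    (fixedPoints (v.sumCongr w)).Subsingleton := by
  rintro (x | x) hx (y | y) hy <;>
    simp only [mem_fixedPoints, IsFixedPt, sumCongr_apply, Sum.map_inl, Sum.map_inr,
      Sum.inl.injEq, Sum.inr.injEq] at hx hy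
  · exact congrArg _ (hv hx hy)
  all_goals exact absurd ‹w _ = _› (hw _)

theorem mem_closure_ringedSet_of_infinite_support [Countable α] {f : Perm α}
    (hf : Involutive f) (hM : (fixedPoints f)ᶜ.Infinite) : f ∈ closure (RingedSet α) := by
  obtain ⟨φ, hφ⟩ := exists_equiv_standardInvolution (ℕ × Bool) hf hM
  obtain ⟨v, hv, hvfix⟩ := exists_involutive_subsingleton_fixedPoints (fixedPoints f)
  let w : Perm (ℕ × Bool) := (Equiv.refl ℕ).prodCongr boolNot
  have hmem : ∀ c : Perm Bool, Involutive c →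
      v.sumCongr (w.prodCongr c) ∈ closure (RingedSet _) :=
    fun c hc => mem_closure_ringedSet_of_subsingleton_fixedPoints
      (involutive_sumCongr hv fun _ => by simp [w, Prod.map, hc _])
      (subsingleton_fixedPoints_sumCongr hvfix fun _ => by simp [w, Prod.ext_iff])
  have hfactor : standardInvolution (fixedPoints f) (ℕ × Bool) =
      v.sumCongr (w.prodCongr 1) * v.sumCongr (w.prodCongr boolNot) := by
    ext (x | ⟨⟨n, b⟩, c⟩) <;> simp [standardInvolution, w, hv _]
  rw [hφ, hfactor]
  exact permCongr_mem_closure_ringedSet φ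
    (mul_mem (hmem 1 fun _ => rfl) (hmem boolNot Bool.not_not))

theorem involutive_of_orderOf_eq_two {f : Perm α} (h : orderOf f = 2) : Involutive f :=
  fun x => by rw [← mul_apply, ← sq, ← h, pow_orderOf_eq_one, one_apply]

end Equiv.Perm

open Equiv.Perm in
theorem involutions_in_closure_ringed {Ω : Type*} [Countable Ω] [Infinite Ω] :
    (∀ f : Equiv.Perm Ω, orderOf f = 2 → f ∈ Subgroup.closure (RingedSet Ω)) ∧
    (∀ f : Equiv.Perm Ω, orderOf f = 2 → (∀ x, f x ≠ x) →
      ∃ g h : Equiv.Perm Ω, (∀ x, orbitOf g x = Set.univ) ∧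
        (∀ x, orbitOf h x = Set.univ) ∧ f = g * h) := by
  refine ⟨fun f hf => ?_, fun f hf hfix =>
    exists_isSingleCycle_mul_eq_of_forall_apply_ne (involutive_of_orderOf_eq_two hf) hfix⟩
  by_cases hM : (fixedPoints f)ᶜ.Finite
  · exact mem_closure_ringedSet_of_finite_support hM
  · exact mem_closure_ringedSet_of_infinite_support (involutive_of_orderOf_eq_two hf) hM
end

section
/- For a countably infinite set Ω, every locally finite permutation lies in the subgroup generated by the set W of wild permutations, i.e. LF ⊆ ⟨W⟩. -/
/-!
Label the orbits of a locally finite `f` by `ℤ × ℤ` (there are countably infinitely many), pick a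
representative `r p` in orbit `p` and let `l p = f⁻¹ (r p)` be the point of that orbit just before
it. The permutation `τ` sending `l (i, m) ↦ l (i, m + 1)` and fixing all other points is wild: its
infinite orbits are the rows `{l (i, m) | m ∈ ℤ}`. So is `σ = f * τ`, which follows `f` inside
orbit `(i, m)` until it reaches `l (i, m)` (this is where the orbits must be finite) and then jumps
to `r (i, m + 1)`; it thus strings row `i` of the orbits of `f` into one infinite orbit.
Hence `f = σ * τ⁻¹ ∈ ⟨W⟩`.
-/

open Equiv Equiv.Perm Function Set

section

variable {Ω : Type*}

lemma mem_orbitOf_iff {f : Perm Ω} {x y : Ω} : y ∈ orbitOf f x ↔ f.SameCycle x y :=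
  Iff.rfl

lemma Equiv.Perm.SameCycle.apply_eq_of_invariant {α : Type*} {g : Perm Ω} {φ : Ω → α}
    (hφ : ∀ x, φ (g x) = φ x) {x y : Ω} (h : g.SameCycle x y) : φ x = φ y := by
  obtain ⟨k, rfl⟩ := h
  induction k using Int.induction_on generalizing x with
  | zero => rfl
  | succ k ih => rw [zpow_add_one, mul_apply, ← ih, hφ]
  | pred k ih =>
    rw [zpow_sub_one, mul_apply, ← ih, ← hφ (g⁻¹ x), Perm.coe_inv, apply_symm_apply]

lemma mem_wildSet_of_infinite_orbitOf {ι : Type*} [Infinite ι] {g : Perm Ω} (a : ι → Ω)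
    (h_infinite : ∀ i, (orbitOf g (a i)).Infinite)
    (h_distinct : ∀ i j, g.SameCycle (a i) (a j) → i = j) : g ∈ WildSet Ω := by
  refine infinite_of_injective_forall_mem (f := fun i => orbitOf g (a i)) (fun i j hij => ?_)
    fun i => ⟨⟨a i, rfl⟩, h_infinite i⟩
  have hj : a j ∈ orbitOf g (a i) := by
    rw [show orbitOf g (a i) = orbitOf g (a j) from hij]
    exact SameCycle.rfl
  exact h_distinct i j hj

lemma exists_pow_apply_eq_inv_apply {f : Perm Ω} {x : Ω} (hx : (orbitOf f x).Finite) :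
    ∃ n : ℕ, (f ^ n) x = f⁻¹ x := by
  obtain ⟨a, b, hab, heq⟩ := hx.exists_lt_map_eq_of_forall_mem
    (f := fun n : ℕ => (f ^ n) x) fun _ => sameCycle_pow_right.2 SameCycle.rfl
  refine ⟨b - a - 1, (f ^ (a + 1)).injective ?_⟩
  rw [← Perm.mul_apply, ← pow_add, show a + 1 + (b - a - 1) = b by omega, pow_succ, mul_apply,
    Perm.coe_inv, apply_symm_apply]
  exact heq.symm

lemma sameCycle_inv_apply_of_eq_apply {f g : Perm Ω} {x : Ω} (hx : (orbitOf f x).Finite)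
    (hg : ∀ y, f.SameCycle x y → f y ≠ x → g y = f y) : g.SameCycle x (f⁻¹ x) := by
  classical
  have hex := exists_pow_apply_eq_inv_apply hx
  have hpow : ∀ j ≤ Nat.find hex, (g ^ j) x = (f ^ j) x := by
    intro j hj
    induction j with
    | zero => rfl
    | succ j ih =>
      have hne : f ((f ^ j) x) ≠ x := fun h =>
        Nat.find_min hex (m := j) (by omega) (Perm.eq_inv_iff_eq.2 h)
      rw [pow_succ', mul_apply, ih (by omega), hg _ (sameCycle_pow_right.2 SameCycle.rfl) hne,
        ← mul_apply, ← pow_succ']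
  exact ⟨Nat.find hex, by rw [zpow_natCast, hpow _ le_rfl, Nat.find_spec hex]⟩

lemma infinite_quotient_sameCycle [Infinite Ω] {f : Perm Ω} (hf : f ∈ LFset Ω) :
    Infinite (Quotient (SameCycle.setoid f)) := by
  refine not_finite_iff_infinite.1 fun hQ => infinite_univ (α := Ω) ?_
  refine (finite_univ.preimage' fun q _ => ?_ : (Quotient.mk (SameCycle.setoid f) ⁻¹' univ).Finite)
  induction q using Quotient.inductionOn with
  | h x => exact (hf x).subset fun y hy => (Quotient.exact hy).symm

namespace WildFactorization

open scoped Classical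

variable (f : Perm Ω) (c : Quotient (SameCycle.setoid f) ≃ ℤ × ℤ)

def orbitLabel (x : Ω) : ℤ × ℤ := c (Quotient.mk _ x)

lemma orbitLabel_apply (x : Ω) : orbitLabel f c (f x) = orbitLabel f c x :=
  congrArg c (Quotient.sound ⟨-1, by simp⟩)

lemma orbitLabel_inv_apply (x : Ω) : orbitLabel f c (f⁻¹ x) = orbitLabel f c x :=
  congrArg c (Quotient.sound ⟨1, by simp⟩)

noncomputable def orbitRep (p : ℤ × ℤ) : Ω := (c.symm p).out

noncomputable def orbitLast (p : ℤ × ℤ) : Ω := f⁻¹ (orbitRep f c p)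

lemma orbitLabel_orbitRep (p : ℤ × ℤ) : orbitLabel f c (orbitRep f c p) = p := by
  rw [orbitLabel, orbitRep, Quotient.out_eq, apply_symm_apply]

lemma orbitLabel_orbitLast (p : ℤ × ℤ) : orbitLabel f c (orbitLast f c p) = p := by
  rw [orbitLast, orbitLabel_inv_apply, orbitLabel_orbitRep]

lemma orbitRep_injective : Injective (orbitRep f c) :=
  LeftInverse.injective (orbitLabel_orbitRep f c)

lemma orbitLast_injective : Injective (orbitLast f c) :=
  LeftInverse.injective (orbitLabel_orbitLast f c)

noncomputable def shiftLasts : Perm Ω :=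
  (Equiv.addRight ((0, 1) : ℤ × ℤ)).extendDomain (ofInjective _ (orbitLast_injective f c))

lemma shiftLasts_orbitLast (p : ℤ × ℤ) :
    shiftLasts f c (orbitLast f c p) = orbitLast f c (p + (0, 1)) :=
  extendDomain_apply_image _ _ p

lemma shiftLasts_of_notMem {x : Ω} (hx : x ∉ range (orbitLast f c)) : shiftLasts f c x = x :=
  extendDomain_apply_not_subtype _ _ hx

lemma sameCycle_shiftLasts_orbitLast_iff {p q : ℤ × ℤ} :
    (shiftLasts f c).SameCycle (orbitLast f c p) (orbitLast f c q) ↔ p.1 = q.1 := by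
  have key := sameCycle_extendDomain (g := Equiv.addRight ((0, 1) : ℤ × ℤ))
    (f := ofInjective _ (orbitLast_injective f c)) (x := p) (y := q)
  simp only [ofInjective_apply] at key
  refine key.trans ⟨fun ⟨k, hk⟩ => ?_, fun h => ⟨q.2 - p.2, ?_⟩⟩
  · simpa [zsmul_addRight] using congrArg Prod.fst hk
  · ext <;> simp [zsmul_addRight, h]

lemma shiftLasts_mem_wildSet : shiftLasts f c ∈ WildSet Ω := by
  refine mem_wildSet_of_infinite_orbitOf (fun i : ℤ => orbitLast f c (i, 0)) (fun i => ?_)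
    fun i j h => (sameCycle_shiftLasts_orbitLast_iff f c).1 h
  refine infinite_of_injective_forall_mem (f := fun m : ℤ => orbitLast f c (i, m)) ?_
    fun m => (sameCycle_shiftLasts_orbitLast_iff f c).2 rfl
  intro m n h
  simpa using orbitLast_injective f c h

noncomputable def concatOrbits : Perm Ω := f * shiftLasts f c

lemma concatOrbits_orbitLast (p : ℤ × ℤ) :
    concatOrbits f c (orbitLast f c p) = orbitRep f c (p + (0, 1)) := by
  rw [concatOrbits, mul_apply, shiftLasts_orbitLast, orbitLast]
  exact f.apply_symm_apply _

lemma fst_orbitLabel_concatOrbits (x : Ω) :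
    (orbitLabel f c (concatOrbits f c x)).1 = (orbitLabel f c x).1 := by
  by_cases hx : x ∈ range (orbitLast f c)
  · obtain ⟨p, rfl⟩ := hx
    simp [concatOrbits_orbitLast, orbitLabel_orbitRep, orbitLabel_orbitLast]
  · rw [concatOrbits, mul_apply, shiftLasts_of_notMem f c hx, orbitLabel_apply]

lemma sameCycle_concatOrbits_orbitRep_add (hf : f ∈ LFset Ω) (p : ℤ × ℤ) :
    (concatOrbits f c).SameCycle (orbitRep f c p) (orbitRep f c (p + (0, 1))) := by
  have hlast : (concatOrbits f c).SameCycle (orbitRep f c p) (orbitLast f c p) := by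
    refine sameCycle_inv_apply_of_eq_apply (hf _) fun y hy hne => ?_
    have hy : y ∉ range (orbitLast f c) := by
      rintro ⟨q, rfl⟩
      obtain rfl : p = q := by
        simpa [orbitLabel_orbitRep, orbitLabel_orbitLast] using
          hy.apply_eq_of_invariant (orbitLabel_apply f c)
      exact hne (f.apply_symm_apply _)
    rw [concatOrbits, mul_apply, shiftLasts_of_notMem f c hy]
  exact hlast.trans ⟨1, by rw [zpow_one, concatOrbits_orbitLast]⟩

lemma concatOrbits_mem_wildSet (hf : f ∈ LFset Ω) : concatOrbits f c ∈ WildSet Ω := by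
  refine mem_wildSet_of_infinite_orbitOf (fun i : ℤ => orbitRep f c (i, 0)) (fun i => ?_)
    fun i j h => ?_
  · refine infinite_of_injective_forall_mem (f := fun m : ℕ => orbitRep f c (i, m)) ?_ fun m => ?_
    · intro m n h
      simpa using orbitRep_injective f c h
    · rw [mem_orbitOf_iff]
      induction m with
      | zero => exact SameCycle.rfl
      | succ m ih =>
        refine ih.trans ?_
        simpa using sameCycle_concatOrbits_orbitRep_add f c hf (i, m)
  · have := h.apply_eq_of_invariant (φ := fun x => (orbitLabel f c x).1)
      (fst_orbitLabel_concatOrbits f c)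
    simpa [orbitLabel_orbitRep] using this

end WildFactorization

end

open WildFactorization in
theorem LF_in_closure_wild {Ω : Type*} [Countable Ω] [Infinite Ω] :
    ∀ f : Equiv.Perm Ω, f ∈ LFset Ω → f ∈ Subgroup.closure (WildSet Ω) := by
  intro f hf
  have := infinite_quotient_sameCycle hf
  obtain ⟨c⟩ := nonempty_equiv_of_countable (α := Quotient (SameCycle.setoid f)) (β := ℤ × ℤ)
  have hfactor : f = concatOrbits f c * (shiftLasts f c)⁻¹ := by
    rw [concatOrbits, mul_inv_cancel_right]
  rw [hfactor]
  exact mul_mem (Subgroup.subset_closure (concatOrbits_mem_wildSet f c hf))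
    (inv_mem (Subgroup.subset_closure (shiftLasts_mem_wildSet f c)))
end
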